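/- arXiv:1107.5698 — 9 statements merged into one kernel-verified Lean document; each statement's English description precedes it below -/
import Mathlib

section
/- For every q ≥ 1 there exists C > 0 such that for all x, z ∈ (0,∞) with x ≠ z, ∫_{Γ_+(x)} |t ∂_t P_t(y−z)|^q dt dy / t² ≤ C / |x−z|^q, where P_t(z) = (1/π) t/(t²+z²) is the classical Poisson kernel and Γ_+(x) = {(y,t) ∈ (0,∞)×(0,∞) : |y−x| < t}. -/
open MeasureTheory Set

/-- The classical one-dimensional Poisson kernel. -/
noncomputable def poissonKernelOneDim (t u : ℝ) : ℝ := (1 / Real.pi) * (t / (t ^ 2 + u ^ 2))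

lemma poisson_deriv (u t : ℝ) (ht : 0 < t) :
    deriv (fun t => poissonKernelOneDim t u) t
      = (1 / Real.pi) * ((u ^ 2 - t ^ 2) / (t ^ 2 + u ^ 2) ^ 2) := by
  have hne : t ^ 2 + u ^ 2 ≠ 0 := by positivity
  have hd : HasDerivAt (fun t : ℝ => t ^ 2 + u ^ 2) (2 * t) t := by
    simpa using ((hasDerivAt_pow 2 t).add_const (u ^ 2))
  have h : HasDerivAt (fun t : ℝ => t / (t ^ 2 + u ^ 2))
      ((1 * (t ^ 2 + u ^ 2) - t * (2 * t)) / (t ^ 2 + u ^ 2) ^ 2) t :=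
    (hasDerivAt_id t).div hd hne
  have h2 := (h.const_mul (1 / Real.pi)).deriv
  unfold poissonKernelOneDim
  rw [h2]
  ring

/-- bound on the small-`t` piece -/
lemma piece_small (q d : ℝ) (hq : 1 ≤ q) (hd0 : 0 < d) :
    ∫⁻ t in Ioc 0 d, ENNReal.ofReal (((9 / Real.pi) * t / (t + d) ^ 2) ^ q / t ^ 2)
        * ENNReal.ofReal (2 * t)
      ≤ ENNReal.ofReal (2 * (9 / Real.pi) ^ q * d ^ (-q)) := by
  have hq0 : (0:ℝ) < q := lt_of_lt_of_le one_pos hq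
  have hpi := Real.pi_pos
  set K : ℝ := 9 / Real.pi with hK
  have hK0 : 0 < K := by positivity
  calc ∫⁻ t in Ioc 0 d, ENNReal.ofReal ((K * t / (t + d) ^ 2) ^ q / t ^ 2) * ENNReal.ofReal (2 * t)
      ≤ ∫⁻ _ in Ioc 0 d, ENNReal.ofReal (2 * K ^ q * d ^ (-q - 1)) := by
        refine setLIntegral_mono measurable_const fun t ht => ?_
        obtain ⟨ht0, htd⟩ := ht
        rw [← ENNReal.ofReal_mul (by positivity)]
        refine ENNReal.ofReal_le_ofReal ?_
        have hd2 : d ^ ((2:ℕ):ℝ) = d ^ (2:ℕ) := Real.rpow_natCast d 2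
        have h1 : K * t / (t + d) ^ 2 ≤ K * t * d ^ (-(2:ℝ)) := by
          rw [show (-(2:ℝ)) = -((2:ℕ):ℝ) by norm_num, Real.rpow_neg hd0.le, ← div_eq_mul_inv,
            hd2]
          gcongr K * t / ?_
          nlinarith
        have h2 : (K * t / (t + d) ^ 2) ^ q ≤ K ^ q * t ^ q * (d ^ (-(2:ℝ))) ^ q := by
          calc (K * t / (t + d) ^ 2) ^ q ≤ (K * t * d ^ (-(2:ℝ))) ^ q :=
                Real.rpow_le_rpow (by positivity) h1 hq0.le
            _ = K ^ q * t ^ q * (d ^ (-(2:ℝ))) ^ q := by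
                rw [Real.mul_rpow (mul_nonneg hK0.le ht0.le) (by positivity)]
                rw [Real.mul_rpow hK0.le ht0.le]
        have h3 : (d ^ (-(2:ℝ))) ^ q = d ^ (-2 * q) := by
          rw [← Real.rpow_mul hd0.le]
        calc (K * t / (t + d) ^ 2) ^ q / t ^ 2 * (2 * t)
            ≤ K ^ q * t ^ q * d ^ (-2 * q) / t ^ 2 * (2 * t) := by
              rw [h3] at h2; gcongr
          _ = 2 * K ^ q * d ^ (-2 * q) * (t ^ q / t) := by
              field_simp
          _ = 2 * K ^ q * d ^ (-2 * q) * t ^ (q - 1) := by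
              rw [Real.rpow_sub ht0, Real.rpow_one]
          _ ≤ 2 * K ^ q * d ^ (-2 * q) * d ^ (q - 1) :=
              mul_le_mul_of_nonneg_left (Real.rpow_le_rpow ht0.le htd (by linarith))
                (mul_nonneg (mul_nonneg (by norm_num) (Real.rpow_nonneg hK0.le q))
                  (Real.rpow_nonneg hd0.le _))
          _ = 2 * K ^ q * d ^ (-q - 1) := by
              rw [mul_assoc, ← Real.rpow_add hd0]; ring_nf
    _ = ENNReal.ofReal (2 * K ^ q * d ^ (-q - 1)) * ENNReal.ofReal d := by
        rw [setLIntegral_const, Real.volume_Ioc, sub_zero]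
    _ ≤ ENNReal.ofReal (2 * K ^ q * d ^ (-q)) := by
        rw [← ENNReal.ofReal_mul (by positivity)]
        refine ENNReal.ofReal_le_ofReal (le_of_eq ?_)
        nth_rewrite 2 [← Real.rpow_one d]
        rw [mul_assoc, ← Real.rpow_add hd0]
        ring_nf

/-- bound on the large-`t` piece -/
lemma piece_large (q d : ℝ) (hq : 1 ≤ q) (hd0 : 0 < d) :
    ∫⁻ t in Ioi d, ENNReal.ofReal (((9 / Real.pi) * t / (t + d) ^ 2) ^ q / t ^ 2)
        * ENNReal.ofReal (2 * t)
      ≤ ENNReal.ofReal (2 * (9 / Real.pi) ^ q * d ^ (-q)) := by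
  have hq0 : (0:ℝ) < q := lt_of_lt_of_le one_pos hq
  have hpi := Real.pi_pos
  set K : ℝ := 9 / Real.pi with hK
  have hK0 : 0 < K := by positivity
  have hexp : -q - 1 < -1 := by linarith
  calc ∫⁻ t in Ioi d, ENNReal.ofReal ((K * t / (t + d) ^ 2) ^ q / t ^ 2) * ENNReal.ofReal (2 * t)
      ≤ ∫⁻ t in Ioi d, ENNReal.ofReal (2 * K ^ q * t ^ (-q - 1)) := by
        refine setLIntegral_mono (by fun_prop) fun t ht => ?_
        have ht0 : 0 < t := hd0.trans ht
        rw [← ENNReal.ofReal_mul (by positivity)]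
        refine ENNReal.ofReal_le_ofReal ?_
        have h1 : K * t / (t + d) ^ 2 ≤ K * t⁻¹ := by
          rw [div_le_iff₀ (by positivity)]
          have h2 : t ^ 2 ≤ (t + d) ^ 2 := by nlinarith
          calc K * t = K * t⁻¹ * t ^ 2 := by field_simp
            _ ≤ K * t⁻¹ * (t + d) ^ 2 := by gcongr
        have h2 : (K * t / (t + d) ^ 2) ^ q ≤ K ^ q * (t ^ (-(1:ℝ))) ^ q := by
          rw [← Real.rpow_neg_one t] at h1
          calc (K * t / (t + d) ^ 2) ^ q ≤ (K * t ^ (-(1:ℝ))) ^ q :=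
            Real.rpow_le_rpow (by positivity) h1 hq0.le
          _ = K ^ q * (t ^ (-(1:ℝ))) ^ q := Real.mul_rpow hK0.le (by positivity)
        have h3 : (t ^ (-(1:ℝ))) ^ q = t ^ (-q) := by
          rw [← Real.rpow_mul ht0.le]; norm_num
        rw [h3] at h2
        calc (K * t / (t + d) ^ 2) ^ q / t ^ 2 * (2 * t)
            ≤ K ^ q * t ^ (-q) / t ^ 2 * (2 * t) := by gcongr
          _ = 2 * K ^ q * (t ^ (-q) / t) := by field_simp
          _ = 2 * K ^ q * t ^ (-q - 1) := by rw [Real.rpow_sub ht0, Real.rpow_one]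
    _ = ENNReal.ofReal (∫ t in Ioi d, 2 * K ^ q * t ^ (-q - 1)) := by
        rw [← ofReal_integral_eq_lintegral_ofReal
          (((integrableOn_Ioi_rpow_of_lt hexp hd0).const_mul _))
          ((ae_restrict_iff' measurableSet_Ioi).2 (ae_of_all _ fun t ht => by
            have ht0 : 0 < t := hd0.trans ht
            positivity))]
    _ ≤ ENNReal.ofReal (2 * K ^ q * d ^ (-q)) := by
        refine ENNReal.ofReal_le_ofReal ?_
        rw [MeasureTheory.integral_const_mul, integral_Ioi_rpow_of_lt hexp hd0]
        have : -q - 1 + 1 = -q := by ring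
        rw [this]
        rw [neg_div_neg_eq]
        exact mul_le_mul_of_nonneg_left (div_le_self (Real.rpow_nonneg hd0.le _) hq)
          (mul_nonneg (by norm_num) (Real.rpow_nonneg hK0.le q))

theorem lusin_bound_translate (q : ℝ) (hq : 1 ≤ q) :
    ∃ C : ℝ, 0 < C ∧ ∀ x z : ℝ, 0 < x → 0 < z → x ≠ z →
      (∫ w in {w : ℝ × ℝ | 0 < w.1 ∧ 0 < w.2 ∧ |w.1 - x| < w.2},
          |w.2 * deriv (fun t => poissonKernelOneDim t (w.1 - z)) w.2| ^ q / w.2 ^ 2)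
        ≤ C / |x - z| ^ q := by
  have hq0 : (0:ℝ) < q := lt_of_lt_of_le one_pos hq
  have hpi := Real.pi_pos
  refine ⟨4 * (9 / Real.pi) ^ q, by positivity, ?_⟩
  intro x z hx hz hxz
  set d : ℝ := |x - z| with hdd
  have hd0 : 0 < d := abs_pos.mpr (sub_ne_zero.mpr hxz)
  set s : Set (ℝ × ℝ) := {w : ℝ × ℝ | 0 < w.1 ∧ 0 < w.2 ∧ |w.1 - x| < w.2} with hss
  have hs : MeasurableSet s := by
    have : s = {w : ℝ × ℝ | 0 < w.1} ∩ ({w : ℝ × ℝ | 0 < w.2} ∩ {w : ℝ × ℝ | |w.1 - x| < w.2}) :=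
      rfl
    rw [this]
    exact (measurableSet_lt (by fun_prop) (by fun_prop)).inter
      ((measurableSet_lt (by fun_prop) (by fun_prop)).inter
        (measurableSet_lt (by fun_prop) (by fun_prop)))
  set F : ℝ × ℝ → ℝ := fun w =>
    |w.2 * ((1 / Real.pi) * (((w.1 - z) ^ 2 - w.2 ^ 2) / (w.2 ^ 2 + (w.1 - z) ^ 2) ^ 2))| ^ q
      / w.2 ^ 2 with hFF
  have hFmeas : Measurable F := by rw [hFF]; fun_prop
  set g : ℝ → ℝ := fun t => ((9 / Real.pi) * t / (t + d) ^ 2) ^ q / t ^ 2 with hgg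
  -- pointwise bound on s
  have hptwise : ∀ w ∈ s, F w ≤ g w.2 := by
    rintro ⟨y, t⟩ ⟨hy, ht, hyx⟩
    simp only [hFF, hgg]
    set u : ℝ := y - z with huu
    have hB : (0:ℝ) < t ^ 2 + u ^ 2 := by positivity
    have habs : |t * ((1 / Real.pi) * ((u ^ 2 - t ^ 2) / (t ^ 2 + u ^ 2) ^ 2))|
        ≤ (9 / Real.pi) * t / (t + d) ^ 2 := by
      have e1 : |t * ((1 / Real.pi) * ((u ^ 2 - t ^ 2) / (t ^ 2 + u ^ 2) ^ 2))|
          = t * (1 / Real.pi) * (|u ^ 2 - t ^ 2| / (t ^ 2 + u ^ 2) ^ 2) := by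
        rw [abs_mul, abs_mul, abs_div, abs_div, abs_one, abs_of_pos ht, abs_of_pos hpi,
          abs_of_pos (by positivity : (0:ℝ) < (t ^ 2 + u ^ 2) ^ 2)]
        ring
      have hA : |u ^ 2 - t ^ 2| ≤ t ^ 2 + u ^ 2 := by
        rw [abs_sub_le_iff]; constructor <;> nlinarith [sq_nonneg u, sq_nonneg t]
      have h9 : (t + d) ^ 2 ≤ 9 * (t ^ 2 + u ^ 2) := by
        have hdle : d < t + |u| := by
          calc d = |x - z| := hdd
            _ ≤ |x - y| + |y - z| := abs_sub_le x y z
            _ = |y - x| + |u| := by rw [abs_sub_comm x y]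
            _ < t + |u| := by linarith
        nlinarith [sq_nonneg (2 * t - |u|), abs_nonneg u, abs_nonneg (x - z), sq_abs u,
          hd0.le, ht]
      calc |t * ((1 / Real.pi) * ((u ^ 2 - t ^ 2) / (t ^ 2 + u ^ 2) ^ 2))|
          = t * (1 / Real.pi) * (|u ^ 2 - t ^ 2| / (t ^ 2 + u ^ 2) ^ 2) := e1
        _ ≤ t * (1 / Real.pi) * ((t ^ 2 + u ^ 2) / (t ^ 2 + u ^ 2) ^ 2) := by gcongr
        _ = t / (Real.pi * (t ^ 2 + u ^ 2)) := by
            field_simp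
        _ ≤ 9 * t / (Real.pi * (t + d) ^ 2) := by
            rw [div_le_div_iff₀ (by positivity) (by positivity)]
            nlinarith [mul_le_mul_of_nonneg_left h9 (mul_pos Real.pi_pos ht).le]
        _ = (9 / Real.pi) * t / (t + d) ^ 2 := by field_simp
    gcongr
  -- replace the derivative by the explicit formula
  have hcongr : EqOn (fun w : ℝ × ℝ =>
      |w.2 * deriv (fun t => poissonKernelOneDim t (w.1 - z)) w.2| ^ q / w.2 ^ 2) F s := by
    rintro ⟨y, t⟩ ⟨_, ht, _⟩
    simp only [hFF]
    rw [poisson_deriv _ _ ht]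
  rw [setIntegral_congr_fun hs hcongr]
  -- pass to the lower Lebesgue integral
  rw [integral_eq_lintegral_of_nonneg_ae
    (ae_of_all _ fun w => by
      have : (0:ℝ) ≤ |w.2 * ((1 / Real.pi) * (((w.1 - z) ^ 2 - w.2 ^ 2) /
          (w.2 ^ 2 + (w.1 - z) ^ 2) ^ 2))| ^ q := Real.rpow_nonneg (abs_nonneg _) q
      positivity)
    hFmeas.aestronglyMeasurable]
  have hd0' : (0:ℝ) < d ^ q := Real.rpow_pos_of_pos hd0 q
  have key : (∫⁻ w in s, ENNReal.ofReal (F w))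
      ≤ ENNReal.ofReal (4 * (9 / Real.pi) ^ q * d ^ (-q)) := by
    have hs' : MeasurableSet {w : ℝ × ℝ | |w.1 - x| < w.2} :=
      measurableSet_lt (by fun_prop) (by fun_prop)
    calc ∫⁻ w in s, ENNReal.ofReal (F w)
        ≤ ∫⁻ w in s, ENNReal.ofReal (g w.2) := by
          refine setLIntegral_mono (by rw [hgg]; fun_prop) fun w hw => ?_
          exact ENNReal.ofReal_le_ofReal (hptwise w hw)
      _ ≤ ∫⁻ w in {w : ℝ × ℝ | |w.1 - x| < w.2}, ENNReal.ofReal (g w.2) :=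
          lintegral_mono_set fun w hw => hw.2.2
      _ = ∫⁻ w, Set.indicator {w : ℝ × ℝ | |w.1 - x| < w.2}
            (fun w => ENNReal.ofReal (g w.2)) w := (lintegral_indicator hs' _).symm
      _ = ∫⁻ t, ENNReal.ofReal (g t) * ENNReal.ofReal (2 * t) := by
          have hmeas : Measurable fun w : ℝ × ℝ => Set.indicator {w : ℝ × ℝ | |w.1 - x| < w.2}
              (fun w => ENNReal.ofReal (g w.2)) w :=
            Measurable.indicator (by rw [hgg]; fun_prop) hs'
          rw [MeasureTheory.Measure.volume_eq_prod, lintegral_prod_symm _ hmeas.aemeasurable]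
          congr 1
          funext t
          have : (fun y => Set.indicator {w : ℝ × ℝ | |w.1 - x| < w.2}
              (fun w => ENNReal.ofReal (g w.2)) (y, t))
              = (Ioo (x - t) (x + t)).indicator (fun _ => ENNReal.ofReal (g t)) := by
            funext y
            have hiff : (y, t) ∈ {w : ℝ × ℝ | |w.1 - x| < w.2} ↔ y ∈ Ioo (x - t) (x + t) := by
              simp only [mem_setOf_eq, mem_Ioo, abs_lt]
              constructor <;> (rintro ⟨a, b⟩; exact ⟨by linarith, by linarith⟩)
            simp only [Set.indicator_apply, hiff]
          rw [this, lintegral_indicator measurableSet_Ioo, setLIntegral_const, Real.volume_Ioo]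
          congr 1
          ring
      _ = ∫⁻ t in Ioi (0:ℝ), ENNReal.ofReal (g t) * ENNReal.ofReal (2 * t) := by
          rw [← lintegral_indicator measurableSet_Ioi]
          apply lintegral_congr
          intro t
          by_cases ht : t ∈ Ioi (0:ℝ)
          · rw [Set.indicator_of_mem ht]
          · rw [Set.indicator_of_notMem ht,
              show ENNReal.ofReal (2 * t) = 0 from ENNReal.ofReal_eq_zero.mpr
                (by simp only [mem_Ioi, not_lt] at ht; linarith), mul_zero]
      _ ≤ ENNReal.ofReal (4 * (9 / Real.pi) ^ q * d ^ (-q)) := by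
          rw [← Ioc_union_Ioi_eq_Ioi hd0.le,
            lintegral_union measurableSet_Ioi Ioc_disjoint_Ioi_same]
          simp only [hgg]
          refine le_trans (add_le_add (piece_small q d hq hd0) (piece_large q d hq hd0))
            (le_of_eq ?_)
          rw [← ENNReal.ofReal_add (by positivity) (by positivity)]
          congr 1
          ring
  have hCd : 4 * (9 / Real.pi) ^ q * d ^ (-q) = 4 * (9 / Real.pi) ^ q / d ^ q := by
    rw [Real.rpow_neg hd0.le, ← div_eq_mul_inv]
  rw [hCd] at key
  exact ENNReal.toReal_le_of_le_ofReal (by positivity) key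
end

section
/- There exists C > 0 such that for all y, z, t ∈ (0,∞), |∂_t[P_t(z−y) − P_t(z+y)]| ≤ C √z / (|z−y| + t)^{5/2}, where P_t is the classical Poisson kernel. -/
/-- The classical one-dimensional Poisson kernel. -/
noncomputable def classicalPoissonKernel (t u : ℝ) : ℝ := (1 / Real.pi) * (t / (t ^ 2 + u ^ 2))

open Real

noncomputable def Fk (t u : ℝ) : ℝ := (u ^ 2 - t ^ 2) / (t ^ 2 + u ^ 2) ^ 2

lemma poisson_hasDerivAt (u t : ℝ) (ht : 0 < t) :
    HasDerivAt (fun s => classicalPoissonKernel s u) ((1 / π) * Fk t u) t := by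
  have hden : t ^ 2 + u ^ 2 ≠ 0 := by positivity
  have h1 : HasDerivAt (fun s : ℝ => s / (s ^ 2 + u ^ 2))
      ((1 * (t ^ 2 + u ^ 2) - t * (2 * t ^ 1)) / (t ^ 2 + u ^ 2) ^ 2) t :=
    (hasDerivAt_id t).div ((hasDerivAt_pow 2 t).add_const _) hden
  have h2 := h1.const_mul (1 / π)
  have heq : (1 * (t ^ 2 + u ^ 2) - t * (2 * t ^ 1)) = u ^ 2 - t ^ 2 := by ring
  rw [heq] at h2
  exact h2

lemma Fk_hasDerivAt (t u : ℝ) (ht : 0 < t) :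
    HasDerivAt (fun v => Fk t v) (2 * u * (3 * t ^ 2 - u ^ 2) / (t ^ 2 + u ^ 2) ^ 3) u := by
  have hden : t ^ 2 + u ^ 2 ≠ 0 := by positivity
  have hden2 : (t ^ 2 + u ^ 2) ^ 2 ≠ 0 := pow_ne_zero _ hden
  have hg : HasDerivAt (fun v : ℝ => t ^ 2 + v ^ 2) (2 * u ^ 1) u :=
    (hasDerivAt_pow 2 u).const_add _
  have hg2 : HasDerivAt (fun v : ℝ => (t ^ 2 + v ^ 2) ^ 2)
      (2 * (t ^ 2 + u ^ 2) ^ 1 * (2 * u ^ 1)) u := by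
    simpa [Pi.pow_def] using hg.pow 2
  have hf : HasDerivAt (fun v : ℝ => v ^ 2 - t ^ 2) (2 * u ^ 1) u :=
    (hasDerivAt_pow 2 u).sub_const _
  have h := hf.div hg2 hden2
  have heq : (2 * u ^ 1 * (t ^ 2 + u ^ 2) ^ 2 -
      (u ^ 2 - t ^ 2) * (2 * (t ^ 2 + u ^ 2) ^ 1 * (2 * u ^ 1))) / ((t ^ 2 + u ^ 2) ^ 2) ^ 2
      = 2 * u * (3 * t ^ 2 - u ^ 2) / (t ^ 2 + u ^ 2) ^ 3 := by
    field_simp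
    ring
  rw [heq] at h
  exact h

lemma key_poly (t s u : ℝ) (ht : 0 < t) (hs : 0 ≤ s) (hsu : s ≤ u) :
    6 * u * (t + s) ^ 3 ≤ 17 * (t ^ 2 + u ^ 2) ^ 2 := by
  have hu : 0 ≤ u := hs.trans hsu
  have h1 : (t + s) ^ 2 ≤ 2 * (t ^ 2 + u ^ 2) := by nlinarith [sq_nonneg (t - s)]
  have h2 : ((t + s) ^ 2) ^ 3 ≤ (2 * (t ^ 2 + u ^ 2)) ^ 3 :=
    pow_le_pow_left₀ (sq_nonneg _) h1 3
  have hu2 : u ^ 2 ≤ t ^ 2 + u ^ 2 := by nlinarith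
  have hA := mul_le_mul_of_nonneg_left h2 (sq_nonneg u)
  have hB := mul_le_mul_of_nonneg_right hu2 (by positivity : (0:ℝ) ≤ (t ^ 2 + u ^ 2) ^ 3)
  have hsq : (6 * u * (t + s) ^ 3) ^ 2 ≤ (17 * (t ^ 2 + u ^ 2) ^ 2) ^ 2 := by
    nlinarith [hA, hB, pow_nonneg (by positivity : (0:ℝ) ≤ t ^ 2 + u ^ 2) 4]
  have hL : 0 ≤ 6 * u * (t + s) ^ 3 := by positivity
  nlinarith [hsq, hL]

lemma Fk_abs_le (t u : ℝ) (ht : 0 < t) (hu : 0 ≤ u) :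
    |Fk t u| ≤ 2 / (t + u) ^ 2 := by
  have hden : (0:ℝ) < (t ^ 2 + u ^ 2) ^ 2 := by positivity
  have hr : (0:ℝ) < (t + u) ^ 2 := by positivity
  rw [Fk, abs_div, abs_of_pos hden, div_le_div_iff₀ hden hr]
  have habs : |u ^ 2 - t ^ 2| ≤ t ^ 2 + u ^ 2 := by
    rw [abs_le]; constructor <;> nlinarith
  have h1 : (t + u) ^ 2 ≤ 2 * (t ^ 2 + u ^ 2) := by nlinarith [sq_nonneg (t - u)]
  nlinarith [mul_le_mul habs h1 hr.le (by positivity : (0:ℝ) ≤ t ^ 2 + u ^ 2),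
    abs_nonneg (u ^ 2 - t ^ 2)]

lemma Fk_deriv_bound (t s u : ℝ) (ht : 0 < t) (hs : 0 ≤ s) (hsu : s ≤ u) :
    |2 * u * (3 * t ^ 2 - u ^ 2) / (t ^ 2 + u ^ 2) ^ 3| ≤ 17 / (s + t) ^ 3 := by
  have hu : 0 ≤ u := hs.trans hsu
  have hden : (0:ℝ) < (t ^ 2 + u ^ 2) ^ 3 := by positivity
  have hr : (0:ℝ) < (s + t) ^ 3 := by positivity
  rw [abs_div, abs_of_pos hden, div_le_div_iff₀ hden hr]
  have habs : |2 * u * (3 * t ^ 2 - u ^ 2)| ≤ 6 * u * (t ^ 2 + u ^ 2) := by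
    rw [abs_le]; constructor <;> nlinarith
  have hkey := key_poly t s u ht hs hsu
  have h2 : (s + t) ^ 3 = (t + s) ^ 3 := by ring
  nlinarith [mul_le_mul_of_nonneg_right habs hr.le,
    mul_le_mul_of_nonneg_right hkey (by positivity : (0:ℝ) ≤ t ^ 2 + u ^ 2)]

theorem odd_poisson_derivative_bound :
    ∃ C : ℝ, 0 < C ∧ ∀ y z t : ℝ, 0 < y → 0 < z → 0 < t →
      |deriv (fun s => classicalPoissonKernel s (z - y) - classicalPoissonKernel s (z + y)) t|
        ≤ C * Real.sqrt z / (|z - y| + t) ^ ((5 : ℝ) / 2) := by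
  refine ⟨34, by norm_num, fun y z t hy hz ht => ?_⟩
  set s : ℝ := |z - y| with hs_def
  set b : ℝ := z + y with hb_def
  have hs0 : 0 ≤ s := abs_nonneg _
  have hsb : s ≤ b := abs_le.mpr ⟨by linarith, by linarith⟩
  have hbs : b - s ≤ 2 * z := by
    have := neg_abs_le (z - y)
    simp only [hs_def, hb_def]; linarith [this]
  have hr : (0:ℝ) < s + t := by linarith
  -- compute the derivative
  have hd : deriv (fun u => classicalPoissonKernel u (z - y) - classicalPoissonKernel u (z + y)) t
      = (1 / π) * Fk t (z - y) - (1 / π) * Fk t (z + y) :=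
    ((poisson_hasDerivAt (z - y) t ht).sub (poisson_hasDerivAt (z + y) t ht)).deriv
  have hFa : Fk t (z - y) = Fk t s := by simp [Fk, hs_def, sq_abs]
  rw [hd, hFa]
  -- |(1/π)(Fk t s - Fk t b)| ≤ |Fk t s - Fk t b|
  have hpi : |1 / π * Fk t s - 1 / π * Fk t b| ≤ |Fk t s - Fk t b| := by
    rw [← mul_sub, abs_mul]
    have h1 : |1 / π| ≤ 1 := by
      rw [abs_of_pos (by positivity : (0:ℝ) < 1 / π)]
      rw [div_le_one pi_pos]
      linarith [pi_gt_three]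
    nlinarith [abs_nonneg (Fk t s - Fk t b)]
  -- Bound A
  have hA : |Fk t s - Fk t b| ≤ 4 / (s + t) ^ 2 := by
    have h1 := Fk_abs_le t s ht hs0
    have h2 := Fk_abs_le t b ht (hs0.trans hsb)
    have h3 : 2 / (t + b) ^ 2 ≤ 2 / (t + s) ^ 2 := by
      gcongr <;> linarith
    have h4 : (t + s) ^ 2 = (s + t) ^ 2 := by ring
    calc |Fk t s - Fk t b| ≤ |Fk t s| + |Fk t b| := abs_sub _ _
      _ ≤ 2 / (t + s) ^ 2 + 2 / (t + s) ^ 2 := by linarith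
      _ = 4 / (s + t) ^ 2 := by rw [← h4]; ring
  -- Bound B via MVT
  have hB : |Fk t s - Fk t b| ≤ 34 * z / (s + t) ^ 3 := by
    have hmvt := Convex.norm_image_sub_le_of_norm_hasDerivWithin_le
      (f := fun v => Fk t v)
      (f' := fun v => 2 * v * (3 * t ^ 2 - v ^ 2) / (t ^ 2 + v ^ 2) ^ 3)
      (s := Set.Icc s b) (C := 17 / (s + t) ^ 3)
      (fun x _ => (Fk_hasDerivAt t x ht).hasDerivWithinAt)
      (fun x hx => by
        rw [Real.norm_eq_abs]
        exact Fk_deriv_bound t s x ht hs0 hx.1)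
      (convex_Icc s b) (Set.left_mem_Icc.mpr hsb) (Set.right_mem_Icc.mpr hsb)
    rw [Real.norm_eq_abs, Real.norm_eq_abs] at hmvt
    rw [abs_sub_comm]
    have habs : |b - s| = b - s := abs_of_nonneg (by linarith)
    rw [habs] at hmvt
    calc |Fk t b - Fk t s| ≤ 17 / (s + t) ^ 3 * (b - s) := hmvt
      _ ≤ 17 / (s + t) ^ 3 * (2 * z) :=
          mul_le_mul_of_nonneg_left hbs (by positivity)
      _ = 34 * z / (s + t) ^ 3 := by ring
  -- rpow decomposition
  have h52 : (s + t) ^ ((5:ℝ) / 2) = (s + t) ^ 2 * Real.sqrt (s + t) := by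
    rw [show ((5:ℝ) / 2) = (2:ℝ) + 1 / 2 by norm_num, Real.rpow_add hr,
      Real.rpow_two, ← Real.sqrt_eq_rpow]
  rw [h52]
  have hX : (0:ℝ) < Real.sqrt (s + t) := Real.sqrt_pos.mpr hr
  have hW : (0:ℝ) ≤ Real.sqrt z := Real.sqrt_nonneg z
  have hXX : Real.sqrt (s + t) * Real.sqrt (s + t) = s + t := Real.mul_self_sqrt hr.le
  have hZZ : Real.sqrt z * Real.sqrt z = z := Real.mul_self_sqrt hz.le
  have hD := hpi
  set D := |1 / π * Fk t s - 1 / π * Fk t b| with hDdef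
  have hD0 : 0 ≤ D := abs_nonneg _
  rw [le_div_iff₀ (by positivity)]
  rcases le_total (s + t) z with hc | hc
  · have hsx : Real.sqrt (s + t) ≤ Real.sqrt z := Real.sqrt_le_sqrt hc
    have hA' : D * (s + t) ^ 2 ≤ 4 := by
      have h := hD.trans hA
      rw [le_div_iff₀ (by positivity)] at h
      linarith
    nlinarith [mul_le_mul_of_nonneg_right hA' hX.le]
  · have hsx : Real.sqrt z ≤ Real.sqrt (s + t) := Real.sqrt_le_sqrt hc
    have hB' : D * (s + t) ^ 3 ≤ 34 * z := by
      have h := hD.trans hB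
      rw [le_div_iff₀ (by positivity)] at h
      linarith
    have e1 : D * ((s + t) ^ 2 * Real.sqrt (s + t)) * Real.sqrt (s + t) = D * (s + t) ^ 3 := by
      rw [show D * ((s + t) ^ 2 * Real.sqrt (s + t)) * Real.sqrt (s + t)
          = D * (s + t) ^ 2 * (Real.sqrt (s + t) * Real.sqrt (s + t)) from by ring, hXX]
      ring
    have e2 : 34 * Real.sqrt z * Real.sqrt z = 34 * z := by
      rw [mul_assoc, hZZ]
    have h1 : 34 * Real.sqrt z * Real.sqrt z ≤ 34 * Real.sqrt z * Real.sqrt (s + t) :=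
      mul_le_mul_of_nonneg_left hsx (by positivity)
    have key : D * ((s + t) ^ 2 * Real.sqrt (s + t)) * Real.sqrt (s + t)
        ≤ 34 * Real.sqrt z * Real.sqrt (s + t) := by
      rw [e1]; linarith
    exact le_of_mul_le_mul_right key hX
end

section
/- Let β > 0. There exists an absolute constant C > 0 such that for all 0 < z < β, y > 0 and t > 0, |∂_t[P_t(y−z) − P_t(y+β)]| ≤ C β / (t + |y−z|)³, where P_t is the classical Poisson kernel. -/
lemma hasDerivAt_poisson' (u t : ℝ) (ht : 0 < t) :
    HasDerivAt (fun s => classicalPoissonKernel s u)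
      ((1 / Real.pi) * ((u ^ 2 - t ^ 2) / (t ^ 2 + u ^ 2) ^ 2)) t := by
  simp only [classicalPoissonKernel]
  have h0 : t ^ 2 + u ^ 2 ≠ 0 := by positivity
  have h1 : HasDerivAt (fun s : ℝ => s / (s ^ 2 + u ^ 2))
      ((1 * (t ^ 2 + u ^ 2) - t * (2 * t ^ 1)) / (t ^ 2 + u ^ 2) ^ 2) t :=
    (hasDerivAt_id t).div ((hasDerivAt_pow 2 t).add_const _) h0
  have h2 := h1.const_mul (1 / Real.pi)
  refine HasDerivAt.congr_deriv h2 ?_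
  field_simp
  ring

lemma hasDerivAt_g (t u : ℝ) (ht : 0 < t) :
    HasDerivAt (fun v : ℝ => (1 / Real.pi) * ((v ^ 2 - t ^ 2) / (t ^ 2 + v ^ 2) ^ 2))
      ((1 / Real.pi) * ((2 * u * (3 * t ^ 2 - u ^ 2)) / (t ^ 2 + u ^ 2) ^ 3)) u := by
  have h0 : (t ^ 2 + u ^ 2) ^ 2 ≠ 0 := by positivity
  have h1 : HasDerivAt (fun v : ℝ => (v ^ 2 - t ^ 2) / (t ^ 2 + v ^ 2) ^ 2)
      (((2 * u ^ 1) * (t ^ 2 + u ^ 2) ^ 2 -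
        (u ^ 2 - t ^ 2) * (2 * (t ^ 2 + u ^ 2) ^ 1 * (2 * u ^ 1))) / ((t ^ 2 + u ^ 2) ^ 2) ^ 2) u :=
    ((hasDerivAt_pow 2 u).sub_const _).div
      (((hasDerivAt_pow 2 u).const_add _).pow 2) h0
  have h2 := h1.const_mul (1 / Real.pi)
  refine HasDerivAt.congr_deriv h2 ?_
  have h3 : t ^ 2 + u ^ 2 ≠ 0 := by positivity
  field_simp
  ring

lemma g_bound (t u : ℝ) (ht : 0 < t) :
    |(1 / Real.pi) * ((u ^ 2 - t ^ 2) / (t ^ 2 + u ^ 2) ^ 2)| ≤ 2 / (Real.pi * (t + |u|) ^ 2) := by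
  have hpi := Real.pi_pos
  have hd : 0 < t + |u| := by positivity
  have h1 : 0 < (t ^ 2 + u ^ 2) := by positivity
  rw [abs_mul, abs_div, abs_div, abs_one, abs_of_pos hpi,
    abs_of_pos (by positivity : (0:ℝ) < (t ^ 2 + u ^ 2) ^ 2)]
  rw [div_mul_eq_mul_div, one_mul, div_div,
    div_le_div_iff₀ (by positivity) (by positivity)]
  have hgoal : |u ^ 2 - t ^ 2| * (t + |u|) ^ 2 ≤ 2 * (t ^ 2 + u ^ 2) ^ 2 := by
    have h2 : |u ^ 2 - t ^ 2| ≤ t ^ 2 + u ^ 2 := by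
      rw [abs_sub_le_iff]; constructor <;> nlinarith [sq_nonneg t, sq_nonneg u]
    have h3 : (t + |u|) ^ 2 ≤ 2 * (t ^ 2 + u ^ 2) := by
      nlinarith [sq_nonneg (t - |u|), sq_abs u]
    calc |u ^ 2 - t ^ 2| * (t + |u|) ^ 2
        ≤ (t ^ 2 + u ^ 2) * (2 * (t ^ 2 + u ^ 2)) :=
          mul_le_mul h2 h3 (by positivity) h1.le
      _ = 2 * (t ^ 2 + u ^ 2) ^ 2 := by ring
  nlinarith [mul_le_mul_of_nonneg_right hgoal hpi.le]

lemma g'_bound (t u : ℝ) (ht : 0 < t) :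
    |(1 / Real.pi) * ((2 * u * (3 * t ^ 2 - u ^ 2)) / (t ^ 2 + u ^ 2) ^ 3)|
      ≤ 48 / (Real.pi * (t + |u|) ^ 3) := by
  have hpi := Real.pi_pos
  have hd : 0 < t + |u| := by positivity
  have h1 : 0 < (t ^ 2 + u ^ 2) := by positivity
  rw [abs_mul, abs_div, abs_div, abs_one, abs_of_pos hpi,
    abs_of_pos (by positivity : (0:ℝ) < (t ^ 2 + u ^ 2) ^ 3)]
  rw [div_mul_eq_mul_div, one_mul, div_div,
    div_le_div_iff₀ (by positivity) (by positivity)]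
  have hgoal : |2 * u * (3 * t ^ 2 - u ^ 2)| * (t + |u|) ^ 3 ≤ 48 * (t ^ 2 + u ^ 2) ^ 3 := by
    have h2 : |2 * u * (3 * t ^ 2 - u ^ 2)| ≤ 2 * (t + |u|) * (3 * (t + |u|) ^ 2) := by
      rw [abs_mul]
      apply mul_le_mul
      · rw [abs_mul, abs_two]
        have : |u| ≤ t + |u| := by linarith
        nlinarith [abs_nonneg u]
      · rw [abs_sub_le_iff]
        constructor <;>
          nlinarith [sq_abs u, sq_nonneg u, sq_nonneg t, abs_nonneg u,
            mul_nonneg ht.le (abs_nonneg u)]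
      · exact abs_nonneg _
      · positivity
    have h3 : (t + |u|) ^ 2 ≤ 2 * (t ^ 2 + u ^ 2) := by
      nlinarith [sq_nonneg (t - |u|), sq_abs u]
    calc |2 * u * (3 * t ^ 2 - u ^ 2)| * (t + |u|) ^ 3
        ≤ (2 * (t + |u|) * (3 * (t + |u|) ^ 2)) * (t + |u|) ^ 3 :=
          mul_le_mul_of_nonneg_right h2 (by positivity)
      _ = 6 * ((t + |u|) ^ 2) ^ 3 := by ring
      _ ≤ 6 * (2 * (t ^ 2 + u ^ 2)) ^ 3 := by
          apply mul_le_mul_of_nonneg_left _ (by norm_num)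
          exact pow_le_pow_left₀ (by positivity) h3 3
      _ = 48 * (t ^ 2 + u ^ 2) ^ 3 := by ring
  nlinarith [mul_le_mul_of_nonneg_right hgoal hpi.le]

lemma key_bound (t a b β : ℝ) (ht : 0 < t) (hβ : 0 < β) (hab : |a| ≤ b)
    (hba : -β ≤ a) (h1 : β ≤ b - a) (h2 : b - a ≤ 2 * β) :
    |(1 / Real.pi) * ((a ^ 2 - t ^ 2) / (t ^ 2 + a ^ 2) ^ 2)
      - (1 / Real.pi) * ((b ^ 2 - t ^ 2) / (t ^ 2 + b ^ 2) ^ 2)|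
      ≤ 1000 * β / (t + |a|) ^ 3 := by
  have hpi := Real.pi_pos
  have hpi3 := Real.pi_gt_three
  have hd : 0 < t + |a| := by positivity
  have hb0 : 0 ≤ b := le_trans (abs_nonneg a) hab
  rcases le_or_gt (t + |a|) (2 * β) with hc | hc
  · -- small d: use triangle inequality
    have hX := g_bound t a ht
    have hY := g_bound t b ht
    rw [abs_of_nonneg hb0] at hY
    have hYd : 2 / (Real.pi * (t + b) ^ 2) ≤ 2 / (Real.pi * (t + |a|) ^ 2) := by
      apply div_le_div_of_nonneg_left (by norm_num) (by positivity)
      have h4 : t + |a| ≤ t + b := by linarith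
      nlinarith [mul_le_mul_of_nonneg_left (mul_self_le_mul_self hd.le h4) hpi.le]
    calc |(1 / Real.pi) * ((a ^ 2 - t ^ 2) / (t ^ 2 + a ^ 2) ^ 2)
          - (1 / Real.pi) * ((b ^ 2 - t ^ 2) / (t ^ 2 + b ^ 2) ^ 2)|
        ≤ |(1 / Real.pi) * ((a ^ 2 - t ^ 2) / (t ^ 2 + a ^ 2) ^ 2)|
          + |(1 / Real.pi) * ((b ^ 2 - t ^ 2) / (t ^ 2 + b ^ 2) ^ 2)| := abs_sub _ _
      _ ≤ 2 / (Real.pi * (t + |a|) ^ 2) + 2 / (Real.pi * (t + |a|) ^ 2) :=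
          add_le_add hX (hY.trans hYd)
      _ = 4 / (Real.pi * (t + |a|) ^ 2) := by ring
      _ ≤ 1000 * β / (t + |a|) ^ 3 := by
          rw [div_le_div_iff₀ (by positivity) (by positivity)]
          nlinarith [mul_le_mul_of_nonneg_right hc (sq_nonneg (t + |a|)),
            mul_pos hβ (pow_pos hd 3), sq_nonneg (t + |a|)]
  · -- large d: mean value inequality
    have hab' : a ≤ b := by linarith
    have hg : ∀ x ∈ Set.Icc a b,
        HasDerivWithinAt (fun v : ℝ => (1 / Real.pi) * ((v ^ 2 - t ^ 2) / (t ^ 2 + v ^ 2) ^ 2))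
          ((1 / Real.pi) * ((2 * x * (3 * t ^ 2 - x ^ 2)) / (t ^ 2 + x ^ 2) ^ 3))
          (Set.Icc a b) x :=
      fun x _ => (hasDerivAt_g t x ht).hasDerivWithinAt
    have hbound : ∀ x ∈ Set.Icc a b,
        ‖(1 / Real.pi) * ((2 * x * (3 * t ^ 2 - x ^ 2)) / (t ^ 2 + x ^ 2) ^ 3)‖
          ≤ 384 / (Real.pi * (t + |a|) ^ 3) := by
      intro x hx
      rw [Real.norm_eq_abs]
      refine (g'_bound t x ht).trans ?_
      have hux : (t + |a|) / 2 ≤ t + |x| := by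
        rcases le_or_gt 0 a with ha | ha
        · have h5 : a ≤ x := hx.1
          have h6 : a ≤ |x| := le_trans h5 (le_abs_self x)
          rw [abs_of_nonneg ha]
          linarith
        · have h5 : |a| ≤ β := by
            rw [abs_of_neg ha]; linarith
          have h6 : (t + |a|) / 2 ≤ t := by linarith
          linarith [abs_nonneg x]
      have hcube : ((t + |a|) / 2) ^ 3 ≤ (t + |x|) ^ 3 :=
        pow_le_pow_left₀ (by positivity) hux 3
      rw [div_le_div_iff₀ (by positivity) (by positivity)]
      nlinarith [mul_le_mul_of_nonneg_left hcube hpi.le, pow_pos hd 3]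
    have hmvt := (convex_Icc a b).norm_image_sub_le_of_norm_hasDerivWithin_le hg hbound
      (Set.left_mem_Icc.2 hab') (Set.right_mem_Icc.2 hab')
    rw [Real.norm_eq_abs, Real.norm_eq_abs] at hmvt
    rw [abs_sub_comm]
    refine hmvt.trans ?_
    rw [abs_of_nonneg (by linarith : (0:ℝ) ≤ b - a)]
    rw [div_mul_eq_mul_div, div_le_div_iff₀ (by positivity) (by positivity)]
    nlinarith [mul_le_mul_of_nonneg_right h2 (pow_nonneg hd.le 3),
      mul_pos hβ (pow_pos hd 3)]

theorem poisson_difference_bound_minus :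
    ∃ C : ℝ, 0 < C ∧ ∀ β z y t : ℝ, 0 < β → 0 < z → z < β → 0 < y → 0 < t →
      |deriv (fun s => classicalPoissonKernel s (y - z) - classicalPoissonKernel s (y + β)) t|
        ≤ C * β / (t + |y - z|) ^ 3 := by
  refine ⟨1000, by norm_num, fun β z y t hβ hz hzβ hy ht => ?_⟩
  have hda := (hasDerivAt_poisson' (y - z) t ht).sub (hasDerivAt_poisson' (y + β) t ht)
  rw [show deriv (fun s => classicalPoissonKernel s (y - z) - classicalPoissonKernel s (y + β)) t
      = deriv ((fun s => classicalPoissonKernel s (y - z)) - fun s => classicalPoissonKernel s (y + β)) t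
      from rfl, hda.deriv]
  apply key_bound t (y - z) (y + β) β ht hβ
  · rw [abs_le]; constructor <;> linarith
  · linarith
  · linarith
  · linarith
end

section
/- Let λ > 0. There exists C > 0 such that for all x, t ∈ (0,∞), ∫_0^{x/2} (xy)^λ t / [(x−y)² + t²]^{λ+1} dy ≤ C t/(t+x). -/
open MeasureTheory Set

theorem bessel_kernel_near_zero_bound (l : ℝ) (hl : 0 < l) :
    ∃ C : ℝ, 0 < C ∧ ∀ x t : ℝ, 0 < x → 0 < t →
      (∫ y in Ioo (0 : ℝ) (x / 2), (x * y) ^ l * t / ((x - y) ^ 2 + t ^ 2) ^ (l + 1))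
        ≤ C * t / (t + x) := by
  refine ⟨2 ^ (l + 2), by positivity, fun x t hx ht => ?_⟩
  set M : ℝ := (x ^ 2 / 2) ^ l * t / (x ^ 2 / 4 + t ^ 2) ^ (l + 1) with hM
  have hden : (0:ℝ) < x ^ 2 / 4 + t ^ 2 := by positivity
  have hMpos : 0 < M := by positivity
  have hbound : ∀ y ∈ Ioo (0:ℝ) (x/2),
      ‖(x * y) ^ l * t / ((x - y) ^ 2 + t ^ 2) ^ (l + 1)‖ ≤ M := by
    intro y hy
    obtain ⟨hy0, hy2⟩ := hy
    have hxy : 0 < x * y := mul_pos hx hy0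
    have h1 : (x * y) ^ l ≤ (x ^ 2 / 2) ^ l := by
      apply Real.rpow_le_rpow hxy.le _ hl.le
      nlinarith
    have hd : (x ^ 2 / 4 + t ^ 2) ≤ ((x - y) ^ 2 + t ^ 2) := by nlinarith
    have hdl : (x ^ 2 / 4 + t ^ 2) ^ (l + 1) ≤ ((x - y) ^ 2 + t ^ 2) ^ (l + 1) :=
      Real.rpow_le_rpow hden.le hd (by linarith)
    rw [Real.norm_of_nonneg (by positivity)]
    exact div_le_div₀ (by positivity)
      (mul_le_mul_of_nonneg_right h1 ht.le) (by positivity) hdl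
  have hvol : volume (Ioo (0:ℝ) (x/2)) < ⊤ := by
    rw [Real.volume_Ioo]; exact ENNReal.ofReal_lt_top
  have hmeas : AEStronglyMeasurable
      (fun y : ℝ => (x * y) ^ l * t / ((x - y) ^ 2 + t ^ 2) ^ (l + 1))
      (volume.restrict (Ioo (0:ℝ) (x/2))) := by
    apply Measurable.aestronglyMeasurable
    fun_prop
  have hint := norm_setIntegral_le_of_norm_le_const hvol hbound
  have htoReal : (volume (Ioo (0:ℝ) (x/2))).toReal = x / 2 := by
    rw [Real.volume_Ioo, ENNReal.toReal_ofReal (by linarith)]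
    ring
  rw [measureReal_def, htoReal] at hint
  have step1 : (∫ y in Ioo (0 : ℝ) (x / 2),
      (x * y) ^ l * t / ((x - y) ^ 2 + t ^ 2) ^ (l + 1)) ≤ M * (x / 2) :=
    le_trans (le_abs_self _) hint
  refine step1.trans ?_
  -- now the algebraic inequality
  have hA : (0:ℝ) < (x ^ 2 / 4) ^ l := by positivity
  have h2l : (0:ℝ) < (2:ℝ) ^ l := by positivity
  have h2 : (x ^ 2 / 2) ^ l = 2 ^ l * (x ^ 2 / 4) ^ l := by
    rw [show x ^ 2 / 2 = 2 * (x ^ 2 / 4) by ring,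
      Real.mul_rpow (by norm_num) (by positivity)]
  have h3 : (x ^ 2 / 4 + t ^ 2) ^ (l + 1) = (x ^ 2 / 4 + t ^ 2) ^ l * (x ^ 2 / 4 + t ^ 2) := by
    rw [Real.rpow_add hden, Real.rpow_one]
  have h4 : (x ^ 2 / 4) ^ l ≤ (x ^ 2 / 4 + t ^ 2) ^ l :=
    Real.rpow_le_rpow (by positivity) (by nlinarith) hl.le
  have h5 : x * (t + x) / 8 ≤ x ^ 2 / 4 + t ^ 2 := by nlinarith [sq_nonneg (x - 2*t)]
  have h6 : (x ^ 2 / 4) ^ l * (x * (t + x) / 8) ≤ (x ^ 2 / 4 + t ^ 2) ^ (l + 1) := by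
    rw [h3]
    exact mul_le_mul h4 h5 (by positivity) (by positivity)
  have h7 : (2:ℝ) ^ (l + 2) = 2 ^ l * 4 := by
    rw [Real.rpow_add (by norm_num)]; norm_num
  rw [hM, h2, div_mul_eq_mul_div, div_le_div_iff₀ (by positivity) (by positivity)]
  rw [h7]
  nlinarith [mul_le_mul_of_nonneg_left h6 (mul_pos (mul_pos h2l ht) (by positivity : (0:ℝ) < x)).le,
    mul_pos ht hx, mul_pos (mul_pos h2l hA) ht]
end

section
/- Let λ > 0. There exists C > 0 such that for all x, t ∈ (0,∞), ∫_{3x/2}^∞ (xy)^λ t / [(x−y)² + t²]^{λ+1} dy ≤ C x^λ t / (x+t)^{λ+1} ≤ C t/(t+x). -/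
open MeasureTheory Set

lemma shift_integral (p a t : ℝ) (h : 0 < a + t) (hp : p < -1) :
    IntegrableOn (fun y : ℝ => (y + t) ^ p) (Ioi a) ∧
    (∫ y in Ioi a, (y + t) ^ p) = -(a + t) ^ (p + 1) / (p + 1) := by
  have hmp : MeasurePreserving (fun y : ℝ => y + t) volume volume :=
    measurePreserving_add_right volume t
  have hemb : MeasurableEmbedding (fun y : ℝ => y + t) :=
    (MeasurableEquiv.addRight t).measurableEmbedding
  have hpre : (fun y : ℝ => y + t) ⁻¹' Ioi (a + t) = Ioi a := by
    rw [preimage_add_const_Ioi]; simp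
  constructor
  · have := (hmp.integrableOn_comp_preimage hemb (s := Ioi (a + t))
      (f := fun z : ℝ => z ^ p)).2 (integrableOn_Ioi_rpow_of_lt hp h)
    rwa [hpre] at this
  · have := hmp.setIntegral_preimage_emb hemb (fun z : ℝ => z ^ p) (Ioi (a + t))
    rw [hpre] at this
    rw [this, integral_Ioi_rpow_of_lt hp h]

theorem bessel_kernel_far_bound (l : ℝ) (hl : 0 < l) :
    ∃ C : ℝ, 0 < C ∧ ∀ x t : ℝ, 0 < x → 0 < t →
      ((∫ y in Ioi (3 * x / 2), (x * y) ^ l * t / ((x - y) ^ 2 + t ^ 2) ^ (l + 1))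
          ≤ C * x ^ l * t / (x + t) ^ (l + 1)) ∧
        C * x ^ l * t / (x + t) ^ (l + 1) ≤ C * t / (t + x) := by
  have h18 : (0:ℝ) < (18:ℝ) ^ (l + 1) := Real.rpow_pos_of_pos (by norm_num) _
  refine ⟨(18:ℝ) ^ (l + 1) / (l + 1), by positivity, fun x t hx ht => ?_⟩
  set C := (18:ℝ) ^ (l + 1) / (l + 1) with hC
  have hC0 : 0 < C := by positivity
  have hxt : 0 < x + t := by linarith
  have hl1 : (0:ℝ) < l + 1 := by linarith
  constructor
  · -- main bound
    set a := 3 * x / 2 with ha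
    have hat : 0 < a + t := by simp only [ha]; linarith
    have hp : -(l + 2) < -1 := by linarith
    obtain ⟨hint, hval⟩ := shift_integral (-(l + 2)) a t hat hp
    set K := (18:ℝ) ^ (l + 1) * (x ^ l * t) with hK
    have hK0 : 0 < K := by positivity
    have key : ∀ y ∈ Ioi a, (x * y) ^ l * t / ((x - y) ^ 2 + t ^ 2) ^ (l + 1)
        ≤ K * (y + t) ^ (-(l + 2)) := by
      intro y hy
      have hy' : a < y := hy
      have hy0 : 0 < y := by simp only [ha] at hy'; linarith
      have hyt : 0 < y + t := by linarith
      have hD : ((y + t) ^ 2 / 18 : ℝ) ≤ (x - y) ^ 2 + t ^ 2 := by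
        have hxy : x < 2 * y / 3 := by simp only [ha] at hy'; linarith
        nlinarith [sq_nonneg (y - t), sq_nonneg (2 * y / 3 - x), mul_pos hy0 ht,
          mul_pos (show (0:ℝ) < y - x by linarith) (show (0:ℝ) < 2*y/3 - x by linarith)]
      have h1 : ((y + t) ^ 2 / 18 : ℝ) ^ (l + 1) ≤ ((x - y) ^ 2 + t ^ 2) ^ (l + 1) :=
        Real.rpow_le_rpow (by positivity) hD (by linarith)
      have h1pos : (0:ℝ) < ((y + t) ^ 2 / 18 : ℝ) ^ (l + 1) := by positivity
      have h2 : (x * y) ^ l * t / ((x - y) ^ 2 + t ^ 2) ^ (l + 1)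
          ≤ (x * y) ^ l * t / ((y + t) ^ 2 / 18) ^ (l + 1) := by
        apply div_le_div_of_nonneg_left _ h1pos h1
        have : (0:ℝ) < x * y := mul_pos hx hy0
        positivity
      have h3 : ((y + t) ^ 2 / 18 : ℝ) ^ (l + 1) = (y + t) ^ (2 * (l + 1)) / 18 ^ (l + 1) := by
        rw [Real.div_rpow (by positivity) (by norm_num)]
        congr 1
        rw [← Real.rpow_natCast (y + t) 2, ← Real.rpow_mul hyt.le]
        norm_num
      have h4 : (x * y) ^ l = x ^ l * y ^ l := Real.mul_rpow hx.le hy0.le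
      have h5 : y ^ l ≤ (y + t) ^ l := Real.rpow_le_rpow hy0.le (by linarith) hl.le
      have h6 : (y + t) ^ (-(l + 2)) = (y + t) ^ l / (y + t) ^ (2 * (l + 1)) := by
        rw [← Real.rpow_sub hyt]
        congr 1; ring
      calc (x * y) ^ l * t / ((x - y) ^ 2 + t ^ 2) ^ (l + 1)
          ≤ (x * y) ^ l * t / ((y + t) ^ 2 / 18) ^ (l + 1) := h2
        _ = x ^ l * y ^ l * t * 18 ^ (l + 1) / (y + t) ^ (2 * (l + 1)) := by
            rw [h3, h4, div_div_eq_mul_div]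
        _ ≤ x ^ l * (y + t) ^ l * t * 18 ^ (l + 1) / (y + t) ^ (2 * (l + 1)) := by
            gcongr
        _ = K * (y + t) ^ (-(l + 2)) := by
            rw [h6, hK]; ring
    have hf0 : ∀ y ∈ Ioi a, 0 ≤ (x * y) ^ l * t / ((x - y) ^ 2 + t ^ 2) ^ (l + 1) := by
      intro y hy
      have hy' : 3 * x / 2 < y := hy
      have hy0 : 0 < y := by linarith
      have : (0:ℝ) < x * y := mul_pos hx hy0
      positivity
    have hmono : (∫ y in Ioi a, (x * y) ^ l * t / ((x - y) ^ 2 + t ^ 2) ^ (l + 1))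
        ≤ ∫ y in Ioi a, K * (y + t) ^ (-(l + 2)) := by
      apply integral_mono_of_nonneg
      · exact (ae_restrict_iff' measurableSet_Ioi).2 (ae_of_all _ hf0)
      · exact hint.const_mul K
      · exact (ae_restrict_iff' measurableSet_Ioi).2 (ae_of_all _ key)
    have hgval : (∫ y in Ioi a, K * (y + t) ^ (-(l + 2)))
        = K * ((a + t) ^ (-(l + 1)) / (l + 1)) := by
      rw [integral_const_mul, hval]
      congr 1
      rw [show -(l + 2) + 1 = -(l + 1) by ring, neg_div_neg_eq]
    refine hmono.trans (hgval.le.trans ?_)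
    have hle : (a + t) ^ (-(l + 1)) ≤ (x + t) ^ (-(l + 1)) := by
      apply Real.rpow_le_rpow_of_nonpos hxt (by simp only [ha]; linarith) (by linarith)
    have hrw : C * x ^ l * t / (x + t) ^ (l + 1)
        = (18:ℝ) ^ (l + 1) * (x ^ l * t) * ((x + t) ^ (-(l + 1)) / (l + 1)) := by
      rw [Real.rpow_neg hxt.le, hC]
      field_simp
    rw [hrw, hK]
    gcongr
  · -- second inequality
    rw [show t + x = x + t by ring, Real.rpow_add hxt l 1, Real.rpow_one,
      div_le_div_iff₀ (by positivity) (by positivity)]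
    have hle : x ^ l ≤ (x + t) ^ l := Real.rpow_le_rpow hx.le (by linarith) hl.le
    calc C * x ^ l * t * (x + t) = (C * t * (x + t)) * x ^ l := by ring
      _ ≤ (C * t * (x + t)) * (x + t) ^ l := by gcongr
      _ = C * t * ((x + t) ^ l * (x + t)) := by ring
end

section
/- Let λ > 0 and define the Bessel Poisson kernel P_t^λ(x,y) = (2λ(xy)^λ t/π) ∫_0^π (sin θ)^{2λ−1} / [(x−y)² + t² + 2xy(1−cos θ)]^{λ+1} dθ for x, y, t > 0. Then there exists C > 0 such that |t ∂_t P_t^λ(x,y)| ≤ C P_t^λ(x,y) ≤ C t/(t² + (x−y)²) for all x, y, t ∈ (0,∞). -/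
open MeasureTheory Set

/-- The Bessel Poisson kernel `P_t^λ(x,y)`. -/
noncomputable def besselPoissonKernel (l t x y : ℝ) : ℝ :=
  (2 * l * (x * y) ^ l * t / Real.pi) *
    ∫ θ in Ioo (0 : ℝ) Real.pi,
      Real.sin θ ^ (2 * l - 1) /
        ((x - y) ^ 2 + t ^ 2 + 2 * x * y * (1 - Real.cos θ)) ^ (l + 1)

open Real

namespace BesselAux


noncomputable def C1 (s : ℝ) : ℝ := max 1 ((2 / π) ^ s)

lemma C1_pos (s : ℝ) : 0 < C1 s := lt_of_lt_of_le one_pos (le_max_left _ _)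

lemma sin_rpow_le (s : ℝ) {θ : ℝ} (h0 : 0 < θ) (h2 : θ ≤ π / 2) :
    Real.sin θ ^ s ≤ C1 s * θ ^ s := by
  have hpi := pi_pos
  have hθπ : θ < π := lt_of_le_of_lt h2 (by linarith)
  have hsin : 0 < Real.sin θ := sin_pos_of_pos_of_lt_pi h0 hθπ
  rcases le_or_gt 0 s with hs | hs
  · calc Real.sin θ ^ s ≤ θ ^ s := rpow_le_rpow hsin.le (sin_lt h0).le hs
      _ ≤ C1 s * θ ^ s := le_mul_of_one_le_left (rpow_nonneg h0.le s) (le_max_left _ _)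
  · have hlow : 2 / π * θ ≤ Real.sin θ := mul_le_sin h0.le h2
    have h1 : Real.sin θ ^ s ≤ (2 / π * θ) ^ s :=
      rpow_le_rpow_of_nonpos (by positivity) hlow hs.le
    calc Real.sin θ ^ s ≤ (2 / π) ^ s * θ ^ s := by
          rw [← mul_rpow (by positivity) h0.le]; exact h1
      _ ≤ C1 s * θ ^ s := mul_le_mul_of_nonneg_right (le_max_right _ _) (rpow_nonneg h0.le s)

lemma sin_rpow_le' (s : ℝ) {θ : ℝ} (h2 : π / 2 ≤ θ) (hπ : θ < π) :
    Real.sin θ ^ s ≤ C1 s * (π - θ) ^ s := by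
  have hpi := pi_pos
  have := sin_rpow_le s (θ := π - θ) (by linarith) (by linarith)
  rwa [Real.sin_pi_sub] at this

lemma int_rpow_Ioo (s : ℝ) (hs : -1 < s) {c : ℝ} (hc : 0 < c) :
    IntegrableOn (fun θ : ℝ => θ ^ s) (Ioo 0 c) := by
  have h := intervalIntegral.intervalIntegrable_rpow' (a := 0) (b := c) hs
  rw [intervalIntegrable_iff_integrableOn_Ioc_of_le hc.le] at h
  exact h.mono_set Ioo_subset_Ioc_self

lemma int_rpow_sub (s : ℝ) (hs : -1 < s) :
    IntegrableOn (fun θ : ℝ => (π - θ) ^ s) (Ioo 0 π) := by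
  have h := (intervalIntegral.intervalIntegrable_rpow' (a := 0) (b := π) hs).comp_sub_left π
  simp only [sub_self, sub_zero] at h
  replace h := h.symm
  rw [intervalIntegrable_iff_integrableOn_Ioc_of_le pi_pos.le] at h
  exact h.mono_set Ioo_subset_Ioc_self

lemma integrableOn_sin_rpow {s : ℝ} (hs : -1 < s) :
    IntegrableOn (fun θ : ℝ => Real.sin θ ^ s) (Ioo 0 π) := by
  have hmeas : Measurable (fun θ : ℝ => Real.sin θ ^ s) := by fun_prop
  have hg : IntegrableOn (fun θ : ℝ => C1 s * θ ^ s + C1 s * (π - θ) ^ s) (Ioo 0 π) :=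
    ((int_rpow_Ioo s hs pi_pos).const_mul _).add ((int_rpow_sub s hs).const_mul _)
  refine MeasureTheory.Integrable.mono hg hmeas.aestronglyMeasurable ?_
  refine (ae_restrict_iff' measurableSet_Ioo).2 (Filter.Eventually.of_forall fun θ hθ => ?_)
  obtain ⟨h0, hπ⟩ := hθ
  have hsin : 0 < Real.sin θ := sin_pos_of_pos_of_lt_pi h0 hπ
  have h1 : 0 ≤ C1 s * θ ^ s := mul_nonneg (C1_pos s).le (rpow_nonneg h0.le s)
  have h2 : 0 ≤ C1 s * (π - θ) ^ s := mul_nonneg (C1_pos s).le (rpow_nonneg (by linarith) s)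
  rw [Real.norm_eq_abs, Real.norm_eq_abs, abs_of_nonneg (rpow_nonneg hsin.le s),
    abs_of_nonneg (by linarith)]
  rcases le_or_gt θ (π / 2) with h | h
  · linarith [sin_rpow_le s h0 h]
  · linarith [sin_rpow_le' s h.le hπ]

lemma integrableOn_sin_rpow_mul {s : ℝ} (hs : -1 < s) {g : ℝ → ℝ} (hg : Measurable g)
    {M : ℝ} (hM : ∀ θ ∈ Ioo (0:ℝ) π, |g θ| ≤ M) :
    IntegrableOn (fun θ : ℝ => Real.sin θ ^ s * g θ) (Ioo 0 π) := by
  have hmeas : Measurable (fun θ : ℝ => Real.sin θ ^ s * g θ) := by fun_prop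
  refine MeasureTheory.Integrable.mono ((integrableOn_sin_rpow hs).mul_const M) hmeas.aestronglyMeasurable ?_
  refine (ae_restrict_iff' measurableSet_Ioo).2 (Filter.Eventually.of_forall fun θ hθ => ?_)
  have hsin : 0 ≤ Real.sin θ ^ s := rpow_nonneg (sin_pos_of_pos_of_lt_pi hθ.1 hθ.2).le s
  rw [Real.norm_eq_abs, Real.norm_eq_abs, abs_mul, abs_of_nonneg hsin, abs_mul,
    abs_of_nonneg hsin]
  exact mul_le_mul_of_nonneg_left ((hM θ hθ).trans (le_abs_self M)) hsin



lemma D_nonneg {x y : ℝ} (hx : 0 < x) (hy : 0 < y) (u θ : ℝ) :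
    0 ≤ (x - y)^2 + u^2 + 2*x*y*(1 - Real.cos θ) := by
  have h1 : 0 ≤ x*y*(1-Real.cos θ) := mul_nonneg (mul_pos hx hy).le (by linarith [Real.cos_le_one θ])
  nlinarith [sq_nonneg (x-y), sq_nonneg u, h1]

lemma D_ge {x y : ℝ} (hx : 0 < x) (hy : 0 < y) (u θ : ℝ) :
    u^2 ≤ (x - y)^2 + u^2 + 2*x*y*(1 - Real.cos θ) := by
  have h1 : 0 ≤ x*y*(1-Real.cos θ) := mul_nonneg (mul_pos hx hy).le (by linarith [Real.cos_le_one θ])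
  nlinarith [sq_nonneg (x-y), h1]

lemma kernel_eq (l : ℝ) {x y : ℝ} (hx : 0 < x) (hy : 0 < y) :
    (fun u => besselPoissonKernel l u x y) = fun u =>
      (2*l*(x*y)^l/π) * (u * ∫ θ in Ioo (0:ℝ) π,
        Real.sin θ ^ (2*l-1) * ((x - y)^2 + u^2 + 2*x*y*(1 - Real.cos θ)) ^ (-(l+1))) := by
  funext u
  unfold besselPoissonKernel
  have h : ∀ θ : ℝ, Real.sin θ ^ (2*l-1) / ((x - y)^2 + u^2 + 2*x*y*(1 - Real.cos θ)) ^ (l+1)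
      = Real.sin θ ^ (2*l-1) * ((x - y)^2 + u^2 + 2*x*y*(1 - Real.cos θ)) ^ (-(l+1)) := by
    intro θ
    rw [Real.rpow_neg (D_nonneg hx hy u θ), div_eq_mul_inv]
  simp_rw [h]
  ring


lemma deriv_part (l : ℝ) (hl : 0 < l) {x y t : ℝ} (hx : 0 < x) (hy : 0 < y) (ht : 0 < t) :
    |t * deriv (fun s => besselPoissonKernel l s x y) t|
      ≤ (3 + 2*l) * besselPoissonKernel l t x y := by
  have hpi := pi_pos
  have hs : -1 < 2*l - 1 := by linarith
  set D : ℝ → ℝ → ℝ := fun u θ => (x - y)^2 + u^2 + 2*x*y*(1 - Real.cos θ) with hD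
  set F : ℝ → ℝ → ℝ := fun u θ => Real.sin θ ^ (2*l-1) * D u θ ^ (-(l+1)) with hF
  set F' : ℝ → ℝ → ℝ :=
    fun u θ => Real.sin θ ^ (2*l-1) * ((-(l+1)) * D u θ ^ (-(l+1)-1) * (2*u)) with hF'
  have hball : ∀ u ∈ Metric.ball t (t/2), t/2 < u ∧ u < 3*t/2 := by
    intro u hu
    rw [Metric.mem_ball, Real.dist_eq, abs_sub_lt_iff] at hu
    constructor <;> linarith [hu.1, hu.2]
  have hDpos : ∀ u θ, 0 < u → 0 < D u θ := by
    intro u θ hu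
    have h2 : 0 < u^2 := by positivity
    exact lt_of_lt_of_le h2 (D_ge hx hy u θ)
  have hFmeas : ∀ u : ℝ, AEStronglyMeasurable (F u) (volume.restrict (Ioo (0:ℝ) π)) := by
    intro u
    apply Measurable.aestronglyMeasurable
    rw [hF, hD]
    fun_prop
  have hFint : Integrable (F t) (volume.restrict (Ioo (0:ℝ) π)) := by
    refine integrableOn_sin_rpow_mul hs (g := fun θ => D t θ ^ (-(l+1)))
      (by rw [hD]; fun_prop) (M := (t^2) ^ (-(l+1))) ?_
    intro θ hθ
    have h1 : (0:ℝ) < t^2 := by positivity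
    have h2 : t^2 ≤ D t θ := D_ge hx hy t θ
    rw [abs_of_nonneg (rpow_nonneg (le_trans h1.le h2) _)]
    exact rpow_le_rpow_of_nonpos h1 h2 (by linarith)
  have hF'meas : AEStronglyMeasurable (F' t) (volume.restrict (Ioo (0:ℝ) π)) := by
    apply Measurable.aestronglyMeasurable
    rw [hF', hD]
    fun_prop
  have hbound_int : Integrable
      (fun θ => Real.sin θ ^ (2*l-1) * ((l+1) * (t^2/4) ^ (-(l+1)-1) * (3*t)))
      (volume.restrict (Ioo (0:ℝ) π)) :=
    (integrableOn_sin_rpow hs).mul_const _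
  have h_bound : ∀ᵐ θ ∂(volume.restrict (Ioo (0:ℝ) π)), ∀ u ∈ Metric.ball t (t/2),
      ‖F' u θ‖ ≤ Real.sin θ ^ (2*l-1) * ((l+1) * (t^2/4) ^ (-(l+1)-1) * (3*t)) := by
    refine (ae_restrict_iff' measurableSet_Ioo).2 (Filter.Eventually.of_forall fun θ hθ => ?_)
    intro u hu
    obtain ⟨hu1, hu2⟩ := hball u hu
    have hu0 : 0 < u := lt_trans (by positivity) hu1
    have hDu : 0 < D u θ := hDpos u θ hu0
    have hD4 : t^2/4 ≤ D u θ := le_trans (by nlinarith) (D_ge hx hy u θ)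
    have hsin : 0 ≤ Real.sin θ ^ (2*l-1) :=
      rpow_nonneg (sin_pos_of_pos_of_lt_pi hθ.1 hθ.2).le _
    have hrp : D u θ ^ (-(l+1)-1) ≤ (t^2/4) ^ (-(l+1)-1) :=
      rpow_le_rpow_of_nonpos (by positivity) hD4 (by linarith)
    have hrp0 : 0 ≤ D u θ ^ (-(l+1)-1) := rpow_nonneg hDu.le _
    rw [hF', Real.norm_eq_abs, abs_mul, abs_of_nonneg hsin]
    refine mul_le_mul_of_nonneg_left ?_ hsin
    have habs : |(-(l+1)) * D u θ ^ (-(l+1)-1) * (2*u)|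
        = (l+1) * D u θ ^ (-(l+1)-1) * (2*u) := by
      rw [abs_mul, abs_mul, abs_neg, abs_of_nonneg (by linarith : (0:ℝ) ≤ l+1),
        abs_of_nonneg hrp0, abs_of_nonneg (by linarith : (0:ℝ) ≤ 2*u)]
    rw [habs]
    calc (l+1) * D u θ ^ (-(l+1)-1) * (2*u)
        = (l+1) * (D u θ ^ (-(l+1)-1) * (2*u)) := by ring
      _ ≤ (l+1) * ((t^2/4) ^ (-(l+1)-1) * (3*t)) :=
          mul_le_mul_of_nonneg_left
            (mul_le_mul hrp (by linarith) (by linarith) (rpow_nonneg (by positivity) _))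
            (by linarith)
      _ = (l+1) * (t^2/4) ^ (-(l+1)-1) * (3*t) := by ring
  have h_diff : ∀ᵐ θ ∂(volume.restrict (Ioo (0:ℝ) π)), ∀ u ∈ Metric.ball t (t/2),
      HasDerivAt (fun v => F v θ) (F' u θ) u := by
    refine (ae_restrict_iff' measurableSet_Ioo).2 (Filter.Eventually.of_forall fun θ hθ => ?_)
    intro u hu
    have hu0 : 0 < u := lt_trans (by positivity) (hball u hu).1
    have hDu : 0 < D u θ := hDpos u θ hu0
    have hD' : HasDerivAt (fun v => D v θ) (2*u) u := by
      have h1 : HasDerivAt (fun v : ℝ => v^2) (2*u) u := by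
        simpa using hasDerivAt_pow 2 u
      have := (h1.const_add ((x-y)^2)).add_const (2*x*y*(1-Real.cos θ))
      simpa [hD] using this
    have hpow := Real.hasDerivAt_rpow_const (x := D u θ) (p := -(l+1)) (Or.inl (ne_of_gt hDu))
    have hcomp := HasDerivAt.comp u hpow hD'
    have := HasDerivAt.const_mul (Real.sin θ ^ (2*l-1)) hcomp
    exact this
  obtain ⟨hF'int, hderiv⟩ := hasDerivAt_integral_of_dominated_loc_of_deriv_le
    (Metric.ball_mem_nhds t (show (0:ℝ) < t/2 by positivity)) (Filter.Eventually.of_forall hFmeas) hFint hF'meas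
    h_bound hbound_int h_diff
  set g : ℝ → ℝ := fun u => ∫ θ in Ioo (0:ℝ) π, F u θ with hg
  set I : ℝ := ∫ θ in Ioo (0:ℝ) π, F' t θ with hI
  have hgder : HasDerivAt g I t := hderiv
  have hK : (0:ℝ) < 2*l*(x*y)^l/π := by positivity
  set K : ℝ := 2*l*(x*y)^l/π with hK'
  have hPder : HasDerivAt (fun u => besselPoissonKernel l u x y) (K * (1 * g t + t * I)) t := by
    rw [kernel_eq l hx hy]
    exact HasDerivAt.const_mul K ((hasDerivAt_id t).mul hgder)
  have hPt : besselPoissonKernel l t x y = K * (t * g t) := congrFun (kernel_eq l hx hy) t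
  have hgt0 : 0 ≤ g t := by
    rw [hg]
    refine setIntegral_nonneg measurableSet_Ioo fun θ hθ => ?_
    exact mul_nonneg (rpow_nonneg (sin_pos_of_pos_of_lt_pi hθ.1 hθ.2).le _)
      (rpow_nonneg (D_nonneg hx hy t θ) _)
  -- pointwise bound for the derivative integrand
  have hpt : ∀ θ ∈ Ioo (0:ℝ) π, t^2 * ‖F' t θ‖ ≤ 2*(l+1)*t * F t θ := by
    intro θ hθ
    have hsin : 0 ≤ Real.sin θ ^ (2*l-1) :=
      rpow_nonneg (sin_pos_of_pos_of_lt_pi hθ.1 hθ.2).le _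
    have hDt : 0 < D t θ := hDpos t θ ht
    have habs : ‖F' t θ‖ = Real.sin θ ^ (2*l-1) * ((l+1) * D t θ ^ (-(l+1)-1) * (2*t)) := by
      rw [hF', Real.norm_eq_abs, abs_mul, abs_of_nonneg hsin, abs_mul, abs_mul, abs_neg,
        abs_of_nonneg (by linarith : (0:ℝ) ≤ l+1),
        abs_of_nonneg (rpow_nonneg hDt.le _),
        abs_of_nonneg (by linarith : (0:ℝ) ≤ 2*t)]
    have hkey : t^2 * D t θ ^ (-(l+1)-1) ≤ D t θ ^ (-(l+1)) := by
      have h1 : t^2 * D t θ ^ (-(l+1)-1) ≤ D t θ * D t θ ^ (-(l+1)-1) :=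
        mul_le_mul_of_nonneg_right (D_ge hx hy t θ) (rpow_nonneg hDt.le _)
      have h2 : D t θ ^ ((1:ℝ) + (-(l+1)-1)) = D t θ ^ (1:ℝ) * D t θ ^ (-(l+1)-1) :=
        Real.rpow_add hDt 1 _
      rw [Real.rpow_one] at h2
      have h3 : (1:ℝ) + (-(l+1)-1) = -(l+1) := by ring
      rw [h3] at h2
      calc t^2 * D t θ ^ (-(l+1)-1) ≤ D t θ * D t θ ^ (-(l+1)-1) := h1
        _ = D t θ ^ (-(l+1)) := h2.symm
    rw [habs, hF]
    calc t^2 * (Real.sin θ ^ (2*l-1) * ((l+1) * D t θ ^ (-(l+1)-1) * (2*t)))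
        = 2*(l+1)*t * (Real.sin θ ^ (2*l-1) * (t^2 * D t θ ^ (-(l+1)-1))) := by ring
      _ ≤ 2*(l+1)*t * (Real.sin θ ^ (2*l-1) * D t θ ^ (-(l+1))) :=
          mul_le_mul_of_nonneg_left (mul_le_mul_of_nonneg_left hkey hsin) (by positivity)
  have hmono : ∫ θ in Ioo (0:ℝ) π, t^2 * ‖F' t θ‖ ≤ ∫ θ in Ioo (0:ℝ) π, 2*(l+1)*t * F t θ := by
    refine integral_mono_ae (hF'int.norm.const_mul _) (hFint.const_mul _) ?_
    exact (ae_restrict_iff' measurableSet_Ioo).2 (Filter.Eventually.of_forall hpt)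
  have hkey2 : t^2 * |I| ≤ 2*(l+1)*t * g t := by
    have h4 : |I| ≤ ∫ θ in Ioo (0:ℝ) π, ‖F' t θ‖ := by
      rw [hI, ← Real.norm_eq_abs]
      exact norm_integral_le_integral_norm _
    calc t^2 * |I| ≤ t^2 * ∫ θ in Ioo (0:ℝ) π, ‖F' t θ‖ :=
          mul_le_mul_of_nonneg_left h4 (by positivity)
      _ = ∫ θ in Ioo (0:ℝ) π, t^2 * ‖F' t θ‖ := (integral_const_mul _ _).symm
      _ ≤ ∫ θ in Ioo (0:ℝ) π, 2*(l+1)*t * F t θ := hmono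
      _ = 2*(l+1)*t * g t := integral_const_mul _ _
  have hder_eq : deriv (fun s => besselPoissonKernel l s x y) t = K * (1 * g t + t * I) :=
    hPder.deriv
  rw [hder_eq, hPt]
  calc |t * (K * (1 * g t + t * I))|
      = |K * (t * g t) + K * (t^2 * I)| := by ring_nf
    _ ≤ |K * (t * g t)| + |K * (t^2 * I)| := abs_add_le _ _
    _ = K * (t * g t) + K * (t^2 * |I|) := by
        rw [abs_of_nonneg (by positivity : (0:ℝ) ≤ K * (t * g t)),
          abs_mul, abs_mul, abs_of_nonneg hK.le, abs_of_nonneg (by positivity : (0:ℝ) ≤ t^2)]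
    _ ≤ K * (t * g t) + K * (2*(l+1)*t * g t) :=
        add_le_add_right (mul_le_mul_of_nonneg_left hkey2 hK.le) _
    _ = (3 + 2*l) * (K * (t * g t)) := by ring

lemma one_minus_cos_ge (θ : ℝ) (h0 : 0 < θ) (hπ : θ < π) :
    2*θ^2 ≤ (1 - Real.cos θ) * π^2 := by
  have hpi := pi_pos
  have hsinhalf : 2/π * (θ/2) ≤ Real.sin (θ/2) := mul_le_sin (by linarith) (by linarith)
  have hsq : Real.sin (θ/2)^2 = (1 - Real.cos θ)/2 := by
    have h1 := Real.sin_sq_add_cos_sq (θ/2)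
    have h2 := Real.cos_sq (θ/2)
    have h3 : 2*(θ/2) = θ := by ring
    rw [h3] at h2
    linarith
  have h9 : (2/π * (θ/2)) * (2/π * (θ/2)) ≤ Real.sin (θ/2) * Real.sin (θ/2) :=
    mul_self_le_mul_self (by positivity) hsinhalf
  have h10 : (2/π * (θ/2)) * (2/π * (θ/2)) * π^2 = θ^2 := by
    field_simp
  nlinarith [sq_nonneg π, h9, hsq, h10]

lemma inv_prod_bound (l : ℝ) (hl : 0 < l) {A b : ℝ} (hA : 0 < A) (hb : 0 < b) :
    (A + b) ^ (-(l+1)) ≤ A⁻¹ * b ^ (-l) := by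
  have hAb : 0 < A + b := by linarith
  have h1 : A * b ^ l ≤ (A + b) ^ (l+1) := by
    have h2 : (A + b) ^ (l+1) = (A + b) ^ (1:ℝ) * (A + b) ^ l := by
      rw [← Real.rpow_add hAb]; ring_nf
    rw [h2, Real.rpow_one]
    exact mul_le_mul (by linarith) (rpow_le_rpow hb.le (by linarith) hl.le)
      (rpow_nonneg hb.le l) hAb.le
  have h3 : (A + b) ^ (-(l+1)) = ((A + b) ^ (l+1))⁻¹ := Real.rpow_neg hAb.le _
  have h4 : A⁻¹ * b ^ (-l) = (A * b ^ l)⁻¹ := by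
    rw [Real.rpow_neg hb.le, mul_inv]
  rw [h3, h4]
  exact inv_anti₀ (by positivity) h1

lemma h1_bound (l : ℝ) (hl : 0 < l) {A b : ℝ} (hA : 0 < A) (hb : 0 < b) :
    ∫ θ in Ioo (0:ℝ) π, θ^(2*l-1) * (A + b*θ^2) ^ (-(l+1))
      ≤ (1/(2*l) + 1/2) * (A⁻¹ * b ^ (-l)) := by
  have hs : -1 < 2*l - 1 := by linarith
  set θ₀ : ℝ := Real.sqrt (A/b) with hθ₀def
  have hθ₀ : 0 < θ₀ := Real.sqrt_pos.2 (by positivity)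
  have hθ₀sq : θ₀^2 = A/b := Real.sq_sqrt (by positivity)
  have hrt : θ₀ ^ ((2:ℝ)) = A/b := by rw [Real.rpow_two]; exact hθ₀sq
  set f : ℝ → ℝ := fun θ => θ^(2*l-1) * (A + b*θ^2) ^ (-(l+1)) with hf
  have hfmeas : Measurable f := by rw [hf]; fun_prop
  have hfnn : ∀ θ : ℝ, 0 < θ → 0 ≤ f θ := fun θ hθ =>
    mul_nonneg (rpow_nonneg hθ.le _) (rpow_nonneg (by positivity) _)
  have hbd1 : ∀ θ ∈ Ioc (0:ℝ) θ₀, f θ ≤ A ^ (-(l+1)) * θ^(2*l-1) := by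
    intro θ hθ
    have h1 : A ≤ A + b*θ^2 := by nlinarith [sq_nonneg θ]
    have h2 : (A + b*θ^2) ^ (-(l+1)) ≤ A ^ (-(l+1)) :=
      rpow_le_rpow_of_nonpos hA h1 (by linarith)
    calc f θ ≤ θ^(2*l-1) * A ^ (-(l+1)) :=
          mul_le_mul_of_nonneg_left h2 (rpow_nonneg hθ.1.le _)
      _ = A ^ (-(l+1)) * θ^(2*l-1) := by ring
  have hbd2 : ∀ θ ∈ Ioi θ₀, f θ ≤ b ^ (-(l+1)) * θ ^ (-3 : ℝ) := by
    intro θ hθ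
    have hθp : 0 < θ := lt_trans hθ₀ hθ
    have h1 : b*θ^2 ≤ A + b*θ^2 := by linarith
    have h2 : (A + b*θ^2) ^ (-(l+1)) ≤ (b*θ^2) ^ (-(l+1)) :=
      rpow_le_rpow_of_nonpos (by positivity) h1 (by linarith)
    have h3 : (b*θ^2) ^ (-(l+1)) = b ^ (-(l+1)) * (θ^2) ^ (-(l+1)) :=
      Real.mul_rpow hb.le (sq_nonneg θ)
    have h4 : (θ^2 : ℝ) ^ (-(l+1)) = θ ^ ((2:ℝ) * (-(l+1))) := by
      rw [← Real.rpow_two, ← Real.rpow_mul hθp.le]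
    have h5 : θ^(2*l-1) * θ ^ ((2:ℝ) * (-(l+1))) = θ ^ (-3 : ℝ) := by
      rw [← Real.rpow_add hθp]
      ring_nf
    calc f θ ≤ θ^(2*l-1) * (b*θ^2) ^ (-(l+1)) :=
          mul_le_mul_of_nonneg_left h2 (rpow_nonneg hθp.le _)
      _ = b ^ (-(l+1)) * (θ^(2*l-1) * (θ^2) ^ (-(l+1))) := by rw [h3]; ring
      _ = b ^ (-(l+1)) * θ ^ (-3 : ℝ) := by rw [h4, h5]
  have hint1 : IntegrableOn f (Ioc 0 θ₀) := by
    have hg : IntegrableOn (fun θ : ℝ => A ^ (-(l+1)) * θ^(2*l-1)) (Ioc 0 θ₀) := by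
      have h := intervalIntegral.intervalIntegrable_rpow' (a := 0) (b := θ₀) hs
      rw [intervalIntegrable_iff_integrableOn_Ioc_of_le hθ₀.le] at h
      exact h.const_mul _
    refine MeasureTheory.Integrable.mono hg hfmeas.aestronglyMeasurable ?_
    refine (ae_restrict_iff' measurableSet_Ioc).2 (Filter.Eventually.of_forall fun θ hθ => ?_)
    rw [Real.norm_eq_abs, Real.norm_eq_abs, abs_of_nonneg (hfnn θ hθ.1),
      abs_of_nonneg (mul_nonneg (rpow_nonneg hA.le _) (rpow_nonneg hθ.1.le _))]
    exact hbd1 θ hθ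
  have hint2 : IntegrableOn f (Ioi θ₀) := by
    have hg : IntegrableOn (fun θ : ℝ => b ^ (-(l+1)) * θ ^ (-3:ℝ)) (Ioi θ₀) :=
      (integrableOn_Ioi_rpow_of_lt (by norm_num) hθ₀).const_mul _
    refine MeasureTheory.Integrable.mono hg hfmeas.aestronglyMeasurable ?_
    refine (ae_restrict_iff' measurableSet_Ioi).2 (Filter.Eventually.of_forall fun θ hθ => ?_)
    have hθp : 0 < θ := lt_trans hθ₀ hθ
    rw [Real.norm_eq_abs, Real.norm_eq_abs, abs_of_nonneg (hfnn θ hθp),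
      abs_of_nonneg (mul_nonneg (rpow_nonneg hb.le _) (rpow_nonneg hθp.le _))]
    exact hbd2 θ hθ
  have hintIoi : IntegrableOn f (Ioi 0) := by
    rw [← Ioc_union_Ioi_eq_Ioi hθ₀.le]
    exact hint1.union hint2
  have hstep1 : ∫ θ in Ioo (0:ℝ) π, f θ ≤ ∫ θ in Ioi (0:ℝ), f θ := by
    refine setIntegral_mono_set hintIoi ?_ ?_
    · exact (ae_restrict_iff' measurableSet_Ioi).2
        (Filter.Eventually.of_forall fun θ hθ => hfnn θ hθ)
    · exact HasSubset.Subset.eventuallyLE fun θ hθ => hθ.1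
  have hsplit : ∫ θ in Ioi (0:ℝ), f θ = (∫ θ in Ioc (0:ℝ) θ₀, f θ) + ∫ θ in Ioi θ₀, f θ := by
    rw [← Ioc_union_Ioi_eq_Ioi hθ₀.le]
    exact setIntegral_union (Ioc_disjoint_Ioi le_rfl) measurableSet_Ioi hint1 hint2
  have hterm1 : ∫ θ in Ioc (0:ℝ) θ₀, f θ ≤ 1/(2*l) * (A⁻¹ * b ^ (-l)) := by
    have hg : IntegrableOn (fun θ : ℝ => A ^ (-(l+1)) * θ^(2*l-1)) (Ioc 0 θ₀) := by
      have h := intervalIntegral.intervalIntegrable_rpow' (a := 0) (b := θ₀) hs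
      rw [intervalIntegrable_iff_integrableOn_Ioc_of_le hθ₀.le] at h
      exact h.const_mul _
    have h1 : ∫ θ in Ioc (0:ℝ) θ₀, f θ ≤ ∫ θ in Ioc (0:ℝ) θ₀, A ^ (-(l+1)) * θ^(2*l-1) :=
      setIntegral_mono_on hint1 hg measurableSet_Ioc hbd1
    have h2 : ∫ θ in Ioc (0:ℝ) θ₀, A ^ (-(l+1)) * θ^(2*l-1)
        = A ^ (-(l+1)) * ∫ θ in Ioc (0:ℝ) θ₀, θ^(2*l-1) := integral_const_mul _ _
    have h3 : ∫ θ in Ioc (0:ℝ) θ₀, θ^(2*l-1)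
        = (θ₀ ^ (2*l-1+1) - (0:ℝ) ^ (2*l-1+1)) / (2*l-1+1) := by
      rw [← intervalIntegral.integral_of_le hθ₀.le]
      exact integral_rpow (Or.inl hs)
    have h0 : (0:ℝ) ^ (2*l-1+1) = 0 := Real.zero_rpow (by intro h; nlinarith)
    have h4 : θ₀ ^ (2*l-1+1) = (A/b) ^ l := by
      have e1 : 2*l-1+1 = (2:ℝ)*l := by ring
      rw [e1, Real.rpow_mul (Real.sqrt_nonneg _), hrt]
    have e2 : A ^ (-(l+1)) * A ^ l = A⁻¹ := by
      rw [← Real.rpow_add hA, show -(l+1)+l = (-1:ℝ) by ring, Real.rpow_neg_one]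
    have h5 : A ^ (-(l+1)) * (((A/b) ^ l - 0) / (2*l-1+1)) = 1/(2*l) * (A⁻¹ * b ^ (-l)) := by
      rw [Real.div_rpow hA.le hb.le, Real.rpow_neg hb.le, show 2*l-1+1 = (2:ℝ)*l by ring]
      calc A ^ (-(l+1)) * ((A ^ l / b ^ l - 0) / (2*l))
          = (A ^ (-(l+1)) * A ^ l) * (1 / b ^ l / (2*l)) := by ring
        _ = A⁻¹ * (1 / b ^ l / (2*l)) := by rw [e2]
        _ = 1/(2*l) * (A⁻¹ * (b ^ l)⁻¹) := by ring
    calc ∫ θ in Ioc (0:ℝ) θ₀, f θ ≤ A ^ (-(l+1)) * ∫ θ in Ioc (0:ℝ) θ₀, θ^(2*l-1) := by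
          rw [← h2]; exact h1
      _ = A ^ (-(l+1)) * (((A/b) ^ l - 0) / (2*l-1+1)) := by rw [h3, h0, h4]
      _ = 1/(2*l) * (A⁻¹ * b ^ (-l)) := h5
  have hterm2 : ∫ θ in Ioi θ₀, f θ ≤ 1/2 * (A⁻¹ * b ^ (-l)) := by
    have hg : IntegrableOn (fun θ : ℝ => b ^ (-(l+1)) * θ ^ (-3:ℝ)) (Ioi θ₀) :=
      (integrableOn_Ioi_rpow_of_lt (by norm_num) hθ₀).const_mul _
    have h1 : ∫ θ in Ioi θ₀, f θ ≤ ∫ θ in Ioi θ₀, b ^ (-(l+1)) * θ ^ (-3:ℝ) :=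
      setIntegral_mono_on hint2 hg measurableSet_Ioi hbd2
    have h2 : ∫ θ in Ioi θ₀, b ^ (-(l+1)) * θ ^ (-3:ℝ)
        = b ^ (-(l+1)) * ∫ θ in Ioi θ₀, θ ^ (-3:ℝ) := integral_const_mul _ _
    have h3 : ∫ θ in Ioi θ₀, θ ^ (-3:ℝ) = -θ₀ ^ (-3+1:ℝ) / (-3+1:ℝ) :=
      integral_Ioi_rpow_of_lt (by norm_num) hθ₀
    have h4 : -θ₀ ^ (-3+1:ℝ) / (-3+1:ℝ) = (b/A) / 2 := by
      have e1 : (-3+1 : ℝ) = -(2:ℝ) := by norm_num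
      rw [e1, Real.rpow_neg (Real.sqrt_nonneg _), hrt]
      rw [inv_div]
      ring
    have e3 : b ^ (-(l+1)) * b = b ^ (-l) := by
      nth_rewrite 2 [← Real.rpow_one b]
      rw [← Real.rpow_add hb, show -(l+1)+1 = -l by ring]
    have h5 : b ^ (-(l+1)) * ((b/A)/2) = 1/2 * (A⁻¹ * b ^ (-l)) := by
      calc b ^ (-(l+1)) * ((b/A)/2) = (b ^ (-(l+1)) * b) * (1/A/2) := by ring
        _ = b ^ (-l) * (1/A/2) := by rw [e3]
        _ = 1/2 * (A⁻¹ * b ^ (-l)) := by ring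
    calc ∫ θ in Ioi θ₀, f θ ≤ b ^ (-(l+1)) * ∫ θ in Ioi θ₀, θ ^ (-3:ℝ) := by
          rw [← h2]; exact h1
      _ = b ^ (-(l+1)) * ((b/A)/2) := by rw [h3, h4]
      _ = 1/2 * (A⁻¹ * b ^ (-l)) := h5
  calc ∫ θ in Ioo (0:ℝ) π, f θ ≤ ∫ θ in Ioi (0:ℝ), f θ := hstep1
    _ = (∫ θ in Ioc (0:ℝ) θ₀, f θ) + ∫ θ in Ioi θ₀, f θ := hsplit
    _ ≤ 1/(2*l) * (A⁻¹ * b ^ (-l)) + 1/2 * (A⁻¹ * b ^ (-l)) := add_le_add hterm1 hterm2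
    _ = (1/(2*l) + 1/2) * (A⁻¹ * b ^ (-l)) := by ring

noncomputable def C2 (l : ℝ) : ℝ :=
  (2*l/π) * C1 (2*l-1) * ((1/(2*l) + 1/2) + π^((2:ℝ)*l)/(2*l)) * (π^2/4) ^ l

lemma C2_pos (l : ℝ) (hl : 0 < l) : 0 < C2 l := by
  have hpi := pi_pos
  have h1 := C1_pos (2*l-1)
  have h2 : (0:ℝ) < π^((2:ℝ)*l) := rpow_pos_of_pos hpi _
  have h3 : (0:ℝ) < (π^2/4) ^ l := rpow_pos_of_pos (by positivity) _
  have h4 : (0:ℝ) < (1/(2*l) + 1/2) + π^((2:ℝ)*l)/(2*l) := by positivity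
  have h5 : (0:ℝ) < 2*l/π := by positivity
  exact mul_pos (mul_pos (mul_pos h5 h1) h4) h3

set_option maxHeartbeats 2000000 in
lemma size_part (l : ℝ) (hl : 0 < l) {x y t : ℝ} (hx : 0 < x) (hy : 0 < y) (ht : 0 < t) :
    besselPoissonKernel l t x y ≤ C2 l * (t / (t^2 + (x-y)^2)) := by
  have hpi := pi_pos
  have hs : -1 < 2*l-1 := by linarith
  have hxy : 0 < x*y := mul_pos hx hy
  have hPt := congrFun (kernel_eq l hx hy) t
  beta_reduce at hPt
  set A : ℝ := (x-y)^2 + t^2 with hA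
  set b : ℝ := 4*x*y/π^2 with hb
  have hApos : 0 < A := by rw [hA]; positivity
  have hbpos : 0 < b := by rw [hb]; positivity
  have hAbpos : 0 < A + b := by linarith
  have hAb2 : ∀ θ : ℝ, 0 < A + b*θ^2 := fun θ => by
    nlinarith [mul_nonneg hbpos.le (sq_nonneg θ)]
  set c3 : ℝ := (1/(2*l) + 1/2) + π^((2:ℝ)*l)/(2*l) with hc3
  set f : ℝ → ℝ := fun θ => Real.sin θ ^ (2*l-1) *
      (A + 2*x*y*(1 - Real.cos θ)) ^ (-(l+1)) with hfdef
  have hDpos : ∀ θ : ℝ, 0 < A + 2*x*y*(1 - Real.cos θ) := by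
    intro θ
    have h1 : 0 ≤ x*y*(1-Real.cos θ) := mul_nonneg hxy.le (by linarith [Real.cos_le_one θ])
    nlinarith [hApos]
  -- pointwise bound
  set h1f : ℝ → ℝ := fun θ => θ^(2*l-1) * (A + b*θ^2) ^ (-(l+1)) with hh1f
  set h2f : ℝ → ℝ := fun θ => (π-θ)^(2*l-1) * (A + b) ^ (-(l+1)) with hh2f
  have hptwise : ∀ θ ∈ Ioo (0:ℝ) π, f θ ≤ C1 (2*l-1) * (h1f θ + h2f θ) := by
    intro θ hθ
    obtain ⟨h0, hπ'⟩ := hθ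
    have hsin : 0 ≤ Real.sin θ ^ (2*l-1) :=
      rpow_nonneg (sin_pos_of_pos_of_lt_pi h0 hπ').le _
    rcases le_or_gt θ (π/2) with hcase | hcase
    · -- small θ
      have hlow : b*θ^2 ≤ 2*x*y*(1-Real.cos θ) := by
        have hcos := one_minus_cos_ge θ h0 hπ'
        rw [hb, div_mul_eq_mul_div, div_le_iff₀ (by positivity : (0:ℝ) < π^2)]
        nlinarith [mul_le_mul_of_nonneg_left hcos hxy.le]
      have hge : A + b*θ^2 ≤ A + 2*x*y*(1-Real.cos θ) := by linarith
      have h2 : (A + 2*x*y*(1 - Real.cos θ)) ^ (-(l+1)) ≤ (A + b*θ^2) ^ (-(l+1)) :=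
        rpow_le_rpow_of_nonpos (hAb2 θ) hge (by linarith)
      have h3 : f θ ≤ (C1 (2*l-1) * θ^(2*l-1)) * (A + b*θ^2) ^ (-(l+1)) :=
        mul_le_mul (sin_rpow_le (2*l-1) h0 hcase) h2 (rpow_nonneg (hDpos θ).le _)
          (mul_nonneg (C1_pos _).le (rpow_nonneg h0.le _))
      have h4 : 0 ≤ h2f θ :=
        mul_nonneg (rpow_nonneg (by linarith) _) (rpow_nonneg hAbpos.le _)
      calc f θ ≤ (C1 (2*l-1) * θ^(2*l-1)) * (A + b*θ^2) ^ (-(l+1)) := h3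
        _ = C1 (2*l-1) * h1f θ := by rw [hh1f]; ring
        _ ≤ C1 (2*l-1) * (h1f θ + h2f θ) :=
            mul_le_mul_of_nonneg_left (le_add_of_nonneg_right h4) (C1_pos _).le
    · -- large θ
      have hcos0 : Real.cos θ ≤ 0 :=
        Real.cos_nonpos_of_pi_div_two_le_of_le hcase.le (by linarith)
      have hble : b ≤ 2*x*y := by
        have hpi2 : (9:ℝ) < π^2 := by nlinarith [pi_gt_three]
        rw [hb, div_le_iff₀ (by positivity : (0:ℝ) < π^2)]
        nlinarith [mul_lt_mul_of_pos_left hpi2 hxy]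
      have hge : A + b ≤ A + 2*x*y*(1-Real.cos θ) := by nlinarith [hxy]
      have h2 : (A + 2*x*y*(1 - Real.cos θ)) ^ (-(l+1)) ≤ (A + b) ^ (-(l+1)) :=
        rpow_le_rpow_of_nonpos hAbpos hge (by linarith)
      have h3 : f θ ≤ (C1 (2*l-1) * (π-θ)^(2*l-1)) * (A + b) ^ (-(l+1)) :=
        mul_le_mul (sin_rpow_le' (2*l-1) hcase.le hπ') h2 (rpow_nonneg (hDpos θ).le _)
          (mul_nonneg (C1_pos _).le (rpow_nonneg (by linarith) _))
      have h4 : 0 ≤ h1f θ :=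
        mul_nonneg (rpow_nonneg h0.le _) (rpow_nonneg (hAb2 θ).le _)
      calc f θ ≤ (C1 (2*l-1) * (π-θ)^(2*l-1)) * (A + b) ^ (-(l+1)) := h3
        _ = C1 (2*l-1) * h2f θ := by rw [hh2f]; ring
        _ ≤ C1 (2*l-1) * (h1f θ + h2f θ) :=
            mul_le_mul_of_nonneg_left (le_add_of_nonneg_left h4) (C1_pos _).le
  -- integrability
  have hfint : IntegrableOn f (Ioo 0 π) := by
    refine integrableOn_sin_rpow_mul hs
      (g := fun θ => (A + 2*x*y*(1 - Real.cos θ)) ^ (-(l+1)))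
      (by rw [hA]; fun_prop) (M := (t^2) ^ (-(l+1))) ?_
    intro θ hθ
    have h1 : (0:ℝ) < t^2 := by positivity
    have h2 : t^2 ≤ A + 2*x*y*(1 - Real.cos θ) := by
      have h3 : 0 ≤ x*y*(1-Real.cos θ) := mul_nonneg hxy.le (by linarith [Real.cos_le_one θ])
      rw [hA]; nlinarith [sq_nonneg (x-y)]
    rw [abs_of_nonneg (rpow_nonneg (hDpos θ).le _)]
    exact rpow_le_rpow_of_nonpos h1 h2 (by linarith)
  have hh1int : IntegrableOn h1f (Ioo 0 π) := by
    have hg : IntegrableOn (fun θ : ℝ => A ^ (-(l+1)) * θ^(2*l-1)) (Ioo 0 π) :=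
      (int_rpow_Ioo (2*l-1) hs pi_pos).const_mul _
    have hmeas : Measurable h1f := by rw [hh1f]; fun_prop
    refine MeasureTheory.Integrable.mono hg hmeas.aestronglyMeasurable ?_
    refine (ae_restrict_iff' measurableSet_Ioo).2 (Filter.Eventually.of_forall fun θ hθ => ?_)
    have h1 : A ≤ A + b*θ^2 := by nlinarith [sq_nonneg θ]
    have h2 : (A + b*θ^2) ^ (-(l+1)) ≤ A ^ (-(l+1)) :=
      rpow_le_rpow_of_nonpos hApos h1 (by linarith)
    rw [Real.norm_eq_abs, Real.norm_eq_abs,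
      abs_of_nonneg (mul_nonneg (rpow_nonneg hθ.1.le _) (rpow_nonneg (hAb2 θ).le _)),
      abs_of_nonneg (mul_nonneg (rpow_nonneg hApos.le _) (rpow_nonneg hθ.1.le _))]
    calc θ^(2*l-1) * (A + b*θ^2) ^ (-(l+1)) ≤ θ^(2*l-1) * A ^ (-(l+1)) :=
          mul_le_mul_of_nonneg_left h2 (rpow_nonneg hθ.1.le _)
      _ = A ^ (-(l+1)) * θ^(2*l-1) := by ring
  have hh2int : IntegrableOn h2f (Ioo 0 π) := (int_rpow_sub (2*l-1) hs).mul_const _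
  -- integral bound
  have hVal : ∫ θ in Ioo (0:ℝ) π, (π-θ)^(2*l-1) = π^((2:ℝ)*l)/(2*l) := by
    rw [← integral_Ioc_eq_integral_Ioo, ← intervalIntegral.integral_of_le pi_pos.le]
    rw [show (fun θ : ℝ => (π-θ)^(2*l-1)) = fun θ : ℝ => (fun u : ℝ => u^(2*l-1)) (π-θ) from rfl]
    rw [intervalIntegral.integral_comp_sub_left (fun u : ℝ => u^(2*l-1)) π]
    simp only [sub_self, sub_zero]
    rw [integral_rpow (Or.inl hs)]
    rw [Real.zero_rpow (show (2*l-1+1:ℝ) ≠ 0 by intro h; nlinarith),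
      show (2*l-1+1:ℝ) = (2:ℝ)*l by ring]
    ring
  have hint2bd : ∫ θ in Ioo (0:ℝ) π, h2f θ ≤ π^((2:ℝ)*l)/(2*l) * (A⁻¹ * b ^ (-l)) := by
    have h1 : ∫ θ in Ioo (0:ℝ) π, h2f θ
        = (∫ θ in Ioo (0:ℝ) π, (π-θ)^(2*l-1)) * (A + b) ^ (-(l+1)) := integral_mul_const _ _
    rw [h1, hVal]
    exact mul_le_mul_of_nonneg_left (inv_prod_bound l hl hApos hbpos) (by positivity)
  have hint1bd : ∫ θ in Ioo (0:ℝ) π, h1f θ ≤ (1/(2*l) + 1/2) * (A⁻¹ * b ^ (-l)) :=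
    h1_bound l hl hApos hbpos
  have hmain : ∫ θ in Ioo (0:ℝ) π, f θ ≤ C1 (2*l-1) * c3 * (A⁻¹ * b ^ (-l)) := by
    have h1 : ∫ θ in Ioo (0:ℝ) π, f θ
        ≤ ∫ θ in Ioo (0:ℝ) π, C1 (2*l-1) * (h1f θ + h2f θ) :=
      setIntegral_mono_on hfint ((hh1int.add hh2int).const_mul _) measurableSet_Ioo hptwise
    have h2 : ∫ θ in Ioo (0:ℝ) π, C1 (2*l-1) * (h1f θ + h2f θ)
        = C1 (2*l-1) * ((∫ θ in Ioo (0:ℝ) π, h1f θ) + ∫ θ in Ioo (0:ℝ) π, h2f θ) := by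
      rw [integral_const_mul, integral_add hh1int hh2int]
    have h3 : (∫ θ in Ioo (0:ℝ) π, h1f θ) + ∫ θ in Ioo (0:ℝ) π, h2f θ
        ≤ c3 * (A⁻¹ * b ^ (-l)) := by
      rw [hc3]
      calc (∫ θ in Ioo (0:ℝ) π, h1f θ) + ∫ θ in Ioo (0:ℝ) π, h2f θ
          ≤ (1/(2*l) + 1/2) * (A⁻¹ * b ^ (-l)) + π^((2:ℝ)*l)/(2*l) * (A⁻¹ * b ^ (-l)) :=
            add_le_add hint1bd hint2bd
        _ = ((1/(2*l) + 1/2) + π^((2:ℝ)*l)/(2*l)) * (A⁻¹ * b ^ (-l)) := by ring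
    calc ∫ θ in Ioo (0:ℝ) π, f θ
        ≤ C1 (2*l-1) * ((∫ θ in Ioo (0:ℝ) π, h1f θ) + ∫ θ in Ioo (0:ℝ) π, h2f θ) := by
          rw [← h2]; exact h1
      _ ≤ C1 (2*l-1) * (c3 * (A⁻¹ * b ^ (-l))) :=
          mul_le_mul_of_nonneg_left h3 (C1_pos _).le
      _ = C1 (2*l-1) * c3 * (A⁻¹ * b ^ (-l)) := by ring
  -- final assembly
  have hKb : (x*y)^l * b ^ (-l) = (π^2/4) ^ l := by
    rw [hb]
    have hq : (0:ℝ) < 4*x*y/π^2 := by positivity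
    calc (x*y)^l * (4*x*y/π^2) ^ (-l)
        = (x*y)^l / (4*x*y/π^2) ^ l := by
          rw [Real.rpow_neg hq.le, ← div_eq_mul_inv]
      _ = ((x*y) / (4*x*y/π^2)) ^ l := (Real.div_rpow hxy.le hq.le l).symm
      _ = (π^2/4) ^ l := by
          rw [show (x*y) / (4*x*y/π^2) = π^2/4 by field_simp]
  have hKpos : (0:ℝ) < 2*l*(x*y)^l/π := by positivity
  have hstep : besselPoissonKernel l t x y
      ≤ (2*l*(x*y)^l/π) * (t * (C1 (2*l-1) * c3 * (A⁻¹ * b ^ (-l)))) := by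
    rw [hPt]
    exact mul_le_mul_of_nonneg_left (mul_le_mul_of_nonneg_left hmain ht.le) hKpos.le
  have hfinal : (2*l*(x*y)^l/π) * (t * (C1 (2*l-1) * c3 * (A⁻¹ * b ^ (-l))))
      = C2 l * (t / (t^2 + (x-y)^2)) := by
    have hAe : t^2 + (x-y)^2 = A := by rw [hA]; ring
    rw [hAe, C2, hc3, div_eq_mul_inv t A]
    linear_combination (2*l/π * t * A⁻¹ * C1 (2*l-1) *
      ((1/(2*l) + 1/2) + π^((2:ℝ)*l)/(2*l))) * hKb
  linarith [hstep, hfinal.le, hfinal.ge]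

lemma kernel_nonneg (l : ℝ) (hl : 0 < l) {x y t : ℝ} (hx : 0 < x) (hy : 0 < y) (ht : 0 < t) :
    0 ≤ besselPoissonKernel l t x y := by
  have hPt := congrFun (kernel_eq l hx hy) t
  beta_reduce at hPt
  rw [hPt]
  have hI : 0 ≤ ∫ θ in Ioo (0:ℝ) π, Real.sin θ ^ (2*l-1) *
      ((x - y)^2 + t^2 + 2*x*y*(1 - Real.cos θ)) ^ (-(l+1)) := by
    refine setIntegral_nonneg measurableSet_Ioo fun θ hθ => ?_
    exact mul_nonneg (rpow_nonneg (sin_pos_of_pos_of_lt_pi hθ.1 hθ.2).le _)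
      (rpow_nonneg (D_nonneg hx hy t θ) _)
  have hK : (0:ℝ) ≤ 2*l*(x*y)^l/π := by positivity
  exact mul_nonneg hK (mul_nonneg ht.le hI)

end BesselAux

theorem bessel_poisson_derivative_bound (l : ℝ) (hl : 0 < l) :
    ∃ C : ℝ, 0 < C ∧ ∀ x y t : ℝ, 0 < x → 0 < y → 0 < t →
      |t * deriv (fun s => besselPoissonKernel l s x y) t|
          ≤ C * besselPoissonKernel l t x y ∧
        besselPoissonKernel l t x y ≤ C * (t / (t ^ 2 + (x - y) ^ 2)) := by
  refine ⟨(3 + 2*l) + BesselAux.C2 l, by nlinarith [BesselAux.C2_pos l hl], ?_⟩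
  intro x y t hx hy ht
  have hP0 : 0 ≤ besselPoissonKernel l t x y := BesselAux.kernel_nonneg l hl hx hy ht
  have htA : 0 ≤ t / (t ^ 2 + (x - y) ^ 2) := by positivity
  have hC2 := BesselAux.C2_pos l hl
  constructor
  · calc |t * deriv (fun s => besselPoissonKernel l s x y) t|
        ≤ (3 + 2*l) * besselPoissonKernel l t x y := BesselAux.deriv_part l hl hx hy ht
      _ ≤ ((3 + 2*l) + BesselAux.C2 l) * besselPoissonKernel l t x y := by nlinarith
  · calc besselPoissonKernel l t x y
        ≤ BesselAux.C2 l * (t / (t ^ 2 + (x - y) ^ 2)) := BesselAux.size_part l hl hx hy ht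
      _ ≤ ((3 + 2*l) + BesselAux.C2 l) * (t / (t ^ 2 + (x - y) ^ 2)) := by nlinarith
end

section
/- For every q' > 1 there exists C > 0 such that for all x, v, t ∈ (0,∞), ∫_0^∞ du / (|x − |u − v|| + u + t)^{2q'+1} ≤ C / (|x−v| + t)^{2q'}. -/
open MeasureTheory Set

lemma my_integrable_base {p : ℝ} (hp : 1 < p) :
    Integrable (fun y : ℝ => (|y| + 1) ^ (-p)) := by
  have h := integrable_one_add_norm (E := ℝ) (μ := volume) (r := p) (by simpa using hp)
  simpa [Real.norm_eq_abs, add_comm] using h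

lemma my_integrable_shift {p s : ℝ} (hp : 1 < p) (hs : 0 < s) (a : ℝ) :
    Integrable (fun u : ℝ => (|u - a| + s) ^ (-p)) := by
  have h1 : Integrable (fun w : ℝ => (|w / s| + 1) ^ (-p)) :=
    (my_integrable_base hp).comp_div hs.ne'
  have h2 : Integrable (fun w : ℝ => s ^ (-p) * (|w / s| + 1) ^ (-p)) := h1.const_mul _
  have heq : ∀ w : ℝ, s ^ (-p) * (|w / s| + 1) ^ (-p) = (|w| + s) ^ (-p) := by
    intro w
    rw [← Real.mul_rpow hs.le (by positivity)]
    congr 1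
    rw [abs_div, abs_of_pos hs, mul_add, mul_one, mul_div_assoc', mul_comm s |w|, mul_div_assoc, div_self hs.ne', mul_one]
  have h3 : Integrable (fun w : ℝ => (|w| + s) ^ (-p)) := by
    simpa only [heq] using h2
  exact h3.comp_sub_right a

lemma my_integral_shift {p s : ℝ} (hp : 1 < p) (hs : 0 < s) (a : ℝ) :
    (∫ u : ℝ, (|u - a| + s) ^ (-p)) = s ^ (-p) * s * ∫ y : ℝ, (|y| + 1) ^ (-p) := by
  have heq : ∀ w : ℝ, (|w| + s) ^ (-p) = s ^ (-p) * (|w / s| + 1) ^ (-p) := by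
    intro w
    rw [← Real.mul_rpow hs.le (by positivity)]
    congr 1
    rw [abs_div, abs_of_pos hs, mul_add, mul_one, mul_div_assoc', mul_comm s |w|, mul_div_assoc, div_self hs.ne', mul_one]
  calc (∫ u : ℝ, (|u - a| + s) ^ (-p))
      = ∫ u : ℝ, (|u| + s) ^ (-p) :=
        integral_sub_right_eq_self (fun u : ℝ => (|u| + s) ^ (-p)) a
    _ = ∫ u : ℝ, s ^ (-p) * (|u / s| + 1) ^ (-p) := by simp_rw [heq]
    _ = s ^ (-p) * ∫ u : ℝ, (|u / s| + 1) ^ (-p) := integral_const_mul _ _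
    _ = s ^ (-p) * (s * ∫ y : ℝ, (|y| + 1) ^ (-p)) := by
        rw [MeasureTheory.Measure.integral_comp_div (fun y : ℝ => (|y| + 1) ^ (-p)) s]
        rw [smul_eq_mul, abs_of_pos hs]
    _ = s ^ (-p) * s * ∫ y : ℝ, (|y| + 1) ^ (-p) := by ring

theorem kernel_integral_bound_abs (q' : ℝ) (hq' : 1 < q') :
    ∃ C : ℝ, 0 < C ∧ ∀ x v t : ℝ, 0 < x → 0 < v → 0 < t →
      (∫ u in Ioi (0 : ℝ), 1 / (abs (x - |u - v|) + u + t) ^ (2 * q' + 1))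
        ≤ C / (|x - v| + t) ^ (2 * q') := by
  set p : ℝ := 2 * q' + 1 with hpdef
  have hp1 : 1 < p := by simp only [hpdef]; linarith
  have hKint : Integrable (fun y : ℝ => (|y| + 1) ^ (-p)) := my_integrable_base hp1
  set K : ℝ := ∫ y : ℝ, (|y| + 1) ^ (-p) with hKdef
  have hK0 : 0 ≤ K := integral_nonneg fun y => Real.rpow_nonneg (by positivity) _
  have h2p : (0:ℝ) < 2 ^ p := Real.rpow_pos_of_pos (by norm_num) _
  refine ⟨2 ^ p * (2 * K) + 1, by nlinarith, ?_⟩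
  intro x v t hx hv ht
  set s : ℝ := |x - v| + t with hsdef
  have hs : 0 < s := by positivity
  -- pointwise bound
  have hbound : ∀ u ∈ Ioi (0:ℝ),
      1 / (abs (x - |u - v|) + u + t) ^ p
        ≤ 2 ^ p * ((|u - (v - x)| + s) ^ (-p) + (|u - (x + v)| + s) ^ (-p)) := by
    intro u hu
    simp only [mem_Ioi] at hu
    have key : ∀ a : ℝ, (|u - a| + s) / 2 ≤ abs (x - |u - v|) + u + t →
        1 / (abs (x - |u - v|) + u + t) ^ p ≤ 2 ^ p * (|u - a| + s) ^ (-p) := by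
      intro a hle
      have hB : 0 < |u - a| + s := by positivity
      have hD : 0 < abs (x - |u - v|) + u + t := lt_of_lt_of_le (by positivity) hle
      have h1 : (abs (x - |u - v|) + u + t) ^ (-p) ≤ ((|u - a| + s) / 2) ^ (-p) :=
        Real.rpow_le_rpow_of_nonpos (by positivity) hle (by linarith)
      have h2 : ((|u - a| + s) / 2) ^ (-p) = 2 ^ p * (|u - a| + s) ^ (-p) := by
        rw [Real.div_rpow hB.le (by norm_num), Real.rpow_neg (by norm_num : (0:ℝ) ≤ 2), div_eq_mul_inv, inv_inv]
        ring
      calc 1 / (abs (x - |u - v|) + u + t) ^ p = (abs (x - |u - v|) + u + t) ^ (-p) := by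
            rw [one_div, ← Real.rpow_neg hD.le]
        _ ≤ 2 ^ p * (|u - a| + s) ^ (-p) := h2 ▸ h1
    rcases le_or_gt u v with huv | huv
    · -- u ≤ v : a = v - x
      have habs : |u - v| = v - u := by rw [abs_of_nonpos (by linarith)]; ring
      have habs2 : |x - (v - u)| = |u - (v - x)| := by
        rw [show x - (v - u) = u - (v - x) by ring]
      have hD1 : |u - (v - x)| + t ≤ abs (x - |u - v|) + u + t := by
        rw [habs, habs2]; linarith
      have hD2 : |x - v| + t ≤ abs (x - |u - v|) + u + t := by
        rw [habs, habs2]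
        rcases abs_cases (u - (v - x)) with ⟨h, _⟩ | ⟨h, _⟩ <;>
          rcases abs_cases (x - v) with ⟨h', _⟩ | ⟨h', _⟩ <;> linarith
      have h := key (v - x) (by rw [hsdef]; linarith)
      have hpos : 0 ≤ 2 ^ p * (|u - (x + v)| + s) ^ (-p) :=
        mul_nonneg h2p.le (Real.rpow_nonneg (by positivity) _)
      calc 1 / (abs (x - |u - v|) + u + t) ^ p ≤ 2 ^ p * (|u - (v - x)| + s) ^ (-p) := h
        _ ≤ 2 ^ p * ((|u - (v - x)| + s) ^ (-p) + (|u - (x + v)| + s) ^ (-p)) := by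
            nlinarith [Real.rpow_nonneg (show (0:ℝ) ≤ |u - (x + v)| + s by positivity) (-p)]
    · -- v < u : a = x + v
      have habs : |u - v| = u - v := by rw [abs_of_pos (by linarith)]
      have habs2 : |x - (u - v)| = |u - (x + v)| := by
        rw [show x - (u - v) = -(u - (x + v)) by ring, abs_neg]
      have hD2 : |x - v| + t ≤ abs (x - |u - v|) + u + t := by
        rw [habs, habs2]
        rcases abs_cases (u - (x + v)) with ⟨h, _⟩ | ⟨h, _⟩ <;>
          rcases abs_cases (x - v) with ⟨h', _⟩ | ⟨h', _⟩ <;> linarith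
      have h := key (x + v) (by rw [hsdef, habs, habs2]; rw [habs, habs2] at hD2; linarith)
      have hpos : 0 ≤ 2 ^ p * (|u - (v - x)| + s) ^ (-p) :=
        mul_nonneg h2p.le (Real.rpow_nonneg (by positivity) _)
      calc 1 / (abs (x - |u - v|) + u + t) ^ p ≤ 2 ^ p * (|u - (x + v)| + s) ^ (-p) := h
        _ ≤ 2 ^ p * ((|u - (v - x)| + s) ^ (-p) + (|u - (x + v)| + s) ^ (-p)) := by
            nlinarith [Real.rpow_nonneg (show (0:ℝ) ≤ |u - (v - x)| + s by positivity) (-p)]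
  -- integrable dominating function
  have hg1 := my_integrable_shift hp1 hs (v - x)
  have hg2 := my_integrable_shift hp1 hs (x + v)
  have hgsum : Integrable (fun u : ℝ =>
      2 ^ p * ((|u - (v - x)| + s) ^ (-p) + (|u - (x + v)| + s) ^ (-p))) :=
    (hg1.add hg2).const_mul _
  have hmono : (∫ u in Ioi (0:ℝ), 1 / (abs (x - |u - v|) + u + t) ^ p)
      ≤ ∫ u in Ioi (0:ℝ),
          2 ^ p * ((|u - (v - x)| + s) ^ (-p) + (|u - (x + v)| + s) ^ (-p)) := by
    apply integral_mono_of_nonneg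
    · filter_upwards [ae_restrict_mem measurableSet_Ioi] with u hu
      have hu' : (0:ℝ) < u := hu
      positivity
    · exact hgsum.restrict
    · filter_upwards [ae_restrict_mem measurableSet_Ioi] with u hu
      exact hbound u hu
  have hsum_eval : (∫ u in Ioi (0:ℝ),
      2 ^ p * ((|u - (v - x)| + s) ^ (-p) + (|u - (x + v)| + s) ^ (-p)))
      ≤ 2 ^ p * (2 * K) * (s ^ (-p) * s) := by
    rw [integral_const_mul, integral_add hg1.restrict hg2.restrict]
    have e1 : (∫ u in Ioi (0:ℝ), (|u - (v - x)| + s) ^ (-p)) ≤ s ^ (-p) * s * K := by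
      rw [← my_integral_shift hp1 hs (v - x)]
      exact setIntegral_le_integral hg1
        (Filter.Eventually.of_forall fun u => Real.rpow_nonneg (by positivity) _)
    have e2 : (∫ u in Ioi (0:ℝ), (|u - (x + v)| + s) ^ (-p)) ≤ s ^ (-p) * s * K := by
      rw [← my_integral_shift hp1 hs (x + v)]
      exact setIntegral_le_integral hg2
        (Filter.Eventually.of_forall fun u => Real.rpow_nonneg (by positivity) _)
    nlinarith
  have hfinal : 2 ^ p * (2 * K) * (s ^ (-p) * s) ≤ (2 ^ p * (2 * K) + 1) / s ^ (2 * q') := by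
    have hss : s ^ (-p) * s = (s ^ (2 * q'))⁻¹ := by
      have h1 : s ^ (-p) * s = s ^ (-p + 1) := by
        rw [Real.rpow_add hs, Real.rpow_one]
      rw [h1, ← Real.rpow_neg hs.le]
      congr 1
      rw [hpdef]; ring
    rw [hss, div_eq_mul_inv]
    have hinv : 0 < (s ^ (2 * q'))⁻¹ := by positivity
    nlinarith
  calc (∫ u in Ioi (0:ℝ), 1 / (abs (x - |u - v|) + u + t) ^ p)
      ≤ 2 ^ p * (2 * K) * (s ^ (-p) * s) := hmono.trans hsum_eval
    _ ≤ (2 ^ p * (2 * K) + 1) / s ^ (2 * q') := hfinal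
end

section
/- Let λ > 0. There exists C > 0 such that for all r, y, u ∈ (0,∞), (yu)^λ r ∫_0^{π/2} θ^{2λ−1} / [(y−u)² + r² + yu θ²]^{λ+2} dθ ≤ C / (|y−u| + r)³. -/
open MeasureTheory Set

private lemma bessel_aux {K r c : ℝ} (hK : 0 < K) (hr : 0 < r) (hc : 0 ≤ c) :
    r * K / (c ^ 2 + r ^ 2) ^ 2 ≤ K * (2 * Real.sqrt 2) / (c + r) ^ 3 := by
  have hD20 : 0 < c ^ 2 + r ^ 2 := by positivity
  set s : ℝ := c + r with hs
  have hspos : 0 < s := by positivity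
  set t : ℝ := Real.sqrt (c ^ 2 + r ^ 2) with ht
  have htpos : 0 < t := Real.sqrt_pos.mpr hD20
  have ht2 : t ^ 2 = c ^ 2 + r ^ 2 := Real.sq_sqrt hD20.le
  have hrt : r ≤ t := by nlinarith [sq_nonneg (t - r)]
  have hst : s ≤ Real.sqrt 2 * t := by
    have h0 : (0:ℝ) ≤ Real.sqrt 2 * t := by positivity
    refine (pow_le_pow_iff_left₀ hspos.le h0 two_ne_zero).mp ?_
    have h2 : (Real.sqrt 2) ^ 2 = 2 := Real.sq_sqrt (by norm_num)
    nlinarith [sq_nonneg (c - r)]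
  have hs3 : s ^ 3 ≤ (Real.sqrt 2 * t) ^ 3 := pow_le_pow_left₀ hspos.le hst 3
  have hkey : r * s ^ 3 ≤ 2 * Real.sqrt 2 * (c ^ 2 + r ^ 2) ^ 2 := by
    have h2 : (Real.sqrt 2) ^ 2 = 2 := Real.sq_sqrt (by norm_num)
    have hle : r * s ^ 3 ≤ t * (Real.sqrt 2 * t) ^ 3 :=
      mul_le_mul hrt hs3 (by positivity) htpos.le
    have ht4 : t ^ 4 = (c ^ 2 + r ^ 2) ^ 2 := by rw [← ht2]; ring
    have h23 : (Real.sqrt 2) ^ 3 = 2 * Real.sqrt 2 := by rw [pow_succ, h2]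
    have heq : t * (Real.sqrt 2 * t) ^ 3 = 2 * Real.sqrt 2 * (c ^ 2 + r ^ 2) ^ 2 := by
      rw [mul_pow, h23, ← ht4]; ring
    linarith [heq ▸ hle]
  rw [div_le_div_iff₀ (by positivity) (by positivity)]
  have := mul_le_mul_of_nonneg_left hkey hK.le
  nlinarith

theorem bessel_theta_integral_bound (l : ℝ) (hl : 0 < l) :
    ∃ C : ℝ, 0 < C ∧ ∀ r y u : ℝ, 0 < r → 0 < y → 0 < u →
      (y * u) ^ l * r *
          (∫ θ in Ioo (0 : ℝ) (Real.pi / 2),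
            θ ^ (2 * l - 1) / ((y - u) ^ 2 + r ^ 2 + y * u * θ ^ 2) ^ (l + 2))
        ≤ C / (|y - u| + r) ^ 3 := by
  set K : ℝ := 1 / (2 * l) + 1 / 4 with hK
  have hKpos : 0 < K := by positivity
  refine ⟨K * (2 * Real.sqrt 2), by positivity, ?_⟩
  intro r y u hr hy hu
  set a : ℝ := y * u with ha
  have ha0 : 0 < a := mul_pos hy hu
  set D2 : ℝ := (y - u) ^ 2 + r ^ 2 with hD2
  have hD20 : 0 < D2 := by positivity
  set θ₀ : ℝ := Real.sqrt (D2 / a) with hθ₀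
  have hx0 : 0 < D2 / a := by positivity
  have hθ₀0 : 0 < θ₀ := Real.sqrt_pos.mpr hx0
  have hθ₀sq : θ₀ ^ 2 = D2 / a := Real.sq_sqrt hx0.le
  set S : Set ℝ := Ioo (0 : ℝ) (Real.pi / 2) with hS
  set g₁ : ℝ → ℝ := fun θ => θ ^ (2 * l - 1) / D2 ^ (l + 2) with hg₁
  set g₂ : ℝ → ℝ := fun θ => θ ^ (-5 : ℝ) / a ^ (l + 2) with hg₂
  set h : ℝ → ℝ := fun θ =>
    (Iio θ₀).indicator g₁ θ + (Ici θ₀).indicator g₂ θ with hh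
  -- integrability facts
  have hg₁intS : IntegrableOn g₁ S := by
    have : IntegrableOn (fun θ : ℝ => θ ^ (2 * l - 1)) S := by
      rw [hS, ← intervalIntegrable_iff_integrableOn_Ioo_of_le
        (by positivity : (0:ℝ) ≤ Real.pi / 2)]
      exact intervalIntegral.intervalIntegrable_rpow' (by linarith)
    simpa [hg₁, div_eq_mul_inv, IntegrableOn] using this.mul_const (D2 ^ (l + 2))⁻¹
  have hg₁int : IntegrableOn g₁ (Ioo 0 θ₀) := by
    have : IntegrableOn (fun θ : ℝ => θ ^ (2 * l - 1)) (Ioo 0 θ₀) := by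
      rw [← intervalIntegrable_iff_integrableOn_Ioo_of_le hθ₀0.le]
      exact intervalIntegral.intervalIntegrable_rpow' (by linarith)
    simpa [hg₁, div_eq_mul_inv, IntegrableOn] using this.mul_const (D2 ^ (l + 2))⁻¹
  have hg₂intIoi : IntegrableOn g₂ (Ioi θ₀) := by
    have : IntegrableOn (fun θ : ℝ => θ ^ (-5 : ℝ)) (Ioi θ₀) :=
      integrableOn_Ioi_rpow_of_lt (by norm_num) hθ₀0
    simpa [hg₂, div_eq_mul_inv, IntegrableOn] using this.mul_const (a ^ (l + 2))⁻¹
  have hg₂intIci : IntegrableOn g₂ (Ici θ₀) := by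
    rwa [integrableOn_Ici_iff_integrableOn_Ioi]
  have hind₁ : Integrable ((Iio θ₀).indicator g₁) (volume.restrict S) := by
    apply IntegrableOn.integrable_indicator _ measurableSet_Iio
    rw [IntegrableOn, Measure.restrict_restrict measurableSet_Iio]
    exact hg₁intS.mono_set inter_subset_right
  have hind₂ : Integrable ((Ici θ₀).indicator g₂) (volume.restrict S) := by
    apply IntegrableOn.integrable_indicator _ measurableSet_Ici
    rw [IntegrableOn, Measure.restrict_restrict measurableSet_Ici]
    exact hg₂intIci.mono_set inter_subset_left
  -- pointwise bound on S
  have hpt : ∀ θ ∈ S, θ ^ (2 * l - 1) / (D2 + a * θ ^ 2) ^ (l + 2) ≤ h θ := by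
    intro θ hθ
    have hθpos : 0 < θ := hθ.1
    rcases lt_or_ge θ θ₀ with hc | hc
    · have h1 : (Iio θ₀).indicator g₁ θ = g₁ θ := indicator_of_mem (mem_Iio.mpr hc) g₁
      have h2 : (Ici θ₀).indicator g₂ θ = 0 :=
        indicator_of_notMem (by simpa using hc) g₂
      rw [hh]; simp only [h1, h2, add_zero]; simp only [hg₁]
      have haθ : 0 ≤ a * θ ^ 2 := by positivity
      gcongr <;> linarith
    · have h1 : (Iio θ₀).indicator g₁ θ = 0 :=
        indicator_of_notMem (by simpa using hc) g₁
      have h2 : (Ici θ₀).indicator g₂ θ = g₂ θ := indicator_of_mem (mem_Ici.mpr hc) g₂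
      rw [hh]; simp only [h1, h2, zero_add]; simp only [hg₂]
      have key : θ ^ (2 * l - 1) / (a * θ ^ 2) ^ (l + 2) = θ ^ (-5 : ℝ) / a ^ (l + 2) := by
        rw [Real.mul_rpow ha0.le (by positivity), ← Real.rpow_natCast θ 2,
          ← Real.rpow_mul hθpos.le]
        rw [show (2 * l - 1 : ℝ) = -5 + (2 : ℕ) * (l + 2) by push_cast; ring,
          Real.rpow_add hθpos]
        field_simp
      calc θ ^ (2 * l - 1) / (D2 + a * θ ^ 2) ^ (l + 2)
          ≤ θ ^ (2 * l - 1) / (a * θ ^ 2) ^ (l + 2) := by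
            have haθ : 0 < a * θ ^ 2 := by positivity
            gcongr <;> linarith
        _ = θ ^ (-5 : ℝ) / a ^ (l + 2) := key
  -- integral bound
  have hmono : (∫ θ in S, θ ^ (2 * l - 1) / (D2 + a * θ ^ 2) ^ (l + 2)) ≤ ∫ θ in S, h θ := by
    refine integral_mono_of_nonneg ?_ (hind₁.add hind₂) ?_
    · refine (ae_restrict_iff' measurableSet_Ioo).mpr (ae_of_all _ fun θ hθ => ?_)
      have := hθ.1; positivity
    · exact (ae_restrict_iff' measurableSet_Ioo).mpr (ae_of_all _ hpt)
  have hsplit : (∫ θ in S, h θ)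
      = (∫ θ in Iio θ₀ ∩ S, g₁ θ) + ∫ θ in Ici θ₀ ∩ S, g₂ θ := by
    rw [hh, integral_add hind₁ hind₂, integral_indicator measurableSet_Iio,
      integral_indicator measurableSet_Ici,
      Measure.restrict_restrict measurableSet_Iio,
      Measure.restrict_restrict measurableSet_Ici]
  have hI₁ : (∫ θ in Iio θ₀ ∩ S, g₁ θ) ≤ θ₀ ^ (2 * l) / (2 * l) / D2 ^ (l + 2) := by
    have hsub : Iio θ₀ ∩ S ⊆ Ioo 0 θ₀ := fun x hx => ⟨hx.2.1, hx.1⟩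
    have h1 : (∫ θ in Iio θ₀ ∩ S, g₁ θ) ≤ ∫ θ in Ioo 0 θ₀, g₁ θ := by
      refine setIntegral_mono_set hg₁int ?_ (HasSubset.Subset.eventuallyLE hsub)
      refine (ae_restrict_iff' measurableSet_Ioo).mpr (ae_of_all _ fun θ hθ => ?_)
      have := hθ.1; positivity
    have h2 : (∫ θ in Ioo 0 θ₀, g₁ θ) = θ₀ ^ (2 * l) / (2 * l) / D2 ^ (l + 2) := by
      rw [hg₁, integral_div, ← integral_Ioc_eq_integral_Ioo,
        ← intervalIntegral.integral_of_le hθ₀0.le,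
        integral_rpow (Or.inl (by linarith))]
      rw [show (2 * l - 1 + 1 : ℝ) = 2 * l by ring,
        Real.zero_rpow (by positivity : (2*l:ℝ) ≠ 0)]
      ring
    linarith
  have hI₂ : (∫ θ in Ici θ₀ ∩ S, g₂ θ) ≤ θ₀ ^ (-4 : ℝ) / 4 / a ^ (l + 2) := by
    have h1 : (∫ θ in Ici θ₀ ∩ S, g₂ θ) ≤ ∫ θ in Ici θ₀, g₂ θ := by
      refine setIntegral_mono_set hg₂intIci ?_
        (HasSubset.Subset.eventuallyLE inter_subset_left)
      refine (ae_restrict_iff' measurableSet_Ici).mpr (ae_of_all _ fun θ hθ => ?_)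
      have hθp : 0 < θ := lt_of_lt_of_le hθ₀0 hθ
      positivity
    have h2 : (∫ θ in Ici θ₀, g₂ θ) = θ₀ ^ (-4 : ℝ) / 4 / a ^ (l + 2) := by
      rw [integral_Ici_eq_integral_Ioi, hg₂, integral_div,
        integral_Ioi_rpow_of_lt (by norm_num) hθ₀0]
      norm_num
    linarith
  -- rpow algebra
  have eθ1 : θ₀ ^ (2 * l) = D2 ^ l / a ^ l := by
    rw [hθ₀, Real.sqrt_eq_rpow, ← Real.rpow_mul hx0.le,
      show (1 / 2 : ℝ) * (2 * l) = l by ring, Real.div_rpow hD20.le ha0.le]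
  have eθ2 : θ₀ ^ (-4 : ℝ) = a ^ 2 / D2 ^ 2 := by
    rw [show (-4 : ℝ) = ((-4 : ℤ) : ℝ) by norm_num, Real.rpow_intCast,
      show (-4 : ℤ) = -(4 : ℕ) by norm_num, zpow_neg, zpow_natCast,
      show (4 : ℕ) = 2 * 2 from rfl, pow_mul, hθ₀sq, div_pow]
    rw [inv_div]
  have ea : a ^ (l + 2) = a ^ l * a ^ 2 := by
    rw [Real.rpow_add ha0, Real.rpow_two]
  have eD : D2 ^ (l + 2) = D2 ^ l * D2 ^ 2 := by
    rw [Real.rpow_add hD20, Real.rpow_two]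
  have hal : (0:ℝ) < a ^ l := Real.rpow_pos_of_pos ha0 l
  have hDl : (0:ℝ) < D2 ^ l := Real.rpow_pos_of_pos hD20 l
  -- combine
  have hmain : a ^ l * r *
      (∫ θ in S, θ ^ (2 * l - 1) / (D2 + a * θ ^ 2) ^ (l + 2)) ≤ r * K / D2 ^ 2 := by
    have hb : (∫ θ in S, θ ^ (2 * l - 1) / (D2 + a * θ ^ 2) ^ (l + 2))
        ≤ θ₀ ^ (2 * l) / (2 * l) / D2 ^ (l + 2) + θ₀ ^ (-4 : ℝ) / 4 / a ^ (l + 2) := by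
      rw [hsplit] at hmono
      linarith
    have := mul_le_mul_of_nonneg_left hb (by positivity : (0:ℝ) ≤ a ^ l * r)
    refine le_trans this (le_of_eq ?_)
    rw [eθ1, eθ2, ea, eD, hK]
    field_simp
  -- final elementary estimate
  have hfin : r * K / D2 ^ 2 ≤ K * (2 * Real.sqrt 2) / (|y - u| + r) ^ 3 := by
    have h := bessel_aux hKpos hr (abs_nonneg (y - u))
    rw [hD2, ← sq_abs (y - u)]
    exact h
  calc a ^ l * r * (∫ θ in S, θ ^ (2 * l - 1) / (D2 + a * θ ^ 2) ^ (l + 2))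
      ≤ r * K / D2 ^ 2 := hmain
    _ ≤ K * (2 * Real.sqrt 2) / (|y - u| + r) ^ 3 := hfin
end

section
/- Let f : ℝ → ℝ be an odd locally integrable function. Then f ∈ BMO(ℝ) if and only if there exists C > 0 such that (1/|I|)∫_I |f(x) − f_I| dx ≤ C for every interval I = (a,b) with 0 < a < b < ∞, and (1/b)∫_0^b |f(x)| dx ≤ C for every b > 0; moreover the BMO norm of f is comparable to the infimum of such C. -/
open MeasureTheory Set

/-- The mean of `f` over the interval `(a,b)`. -/
noncomputable def intervalMean (f : ℝ → ℝ) (a b : ℝ) : ℝ :=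
  (b - a)⁻¹ * ∫ x in Ioo a b, f x

/-- The mean oscillation of `f` over the interval `(a,b)`. -/
noncomputable def meanOsc (f : ℝ → ℝ) (a b : ℝ) : ℝ :=
  (b - a)⁻¹ * ∫ x in Ioo a b, |f x - intervalMean f a b|

section Aux

variable {f : ℝ → ℝ}

lemma aux_intOn (hf : LocallyIntegrable f volume) (a b : ℝ) :
    IntegrableOn f (Ioo a b) volume :=
  (hf.integrableOn_isCompact isCompact_Icc).mono_set Ioo_subset_Icc_self

lemma aux_meanOsc_nonneg (f : ℝ → ℝ) {a b : ℝ} (hab : a ≤ b) : 0 ≤ meanOsc f a b := by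
  apply mul_nonneg (by simp [inv_nonneg]; linarith)
  exact integral_nonneg fun x => abs_nonneg _

lemma aux_integral_Ioo_comp_neg (g : ℝ → ℝ) {a b : ℝ} (hab : a ≤ b) :
    (∫ x in Ioo a b, g (-x)) = ∫ x in Ioo (-b) (-a), g x := by
  rw [← integral_Ioc_eq_integral_Ioo, ← integral_Ioc_eq_integral_Ioo,
    ← intervalIntegral.integral_of_le hab,
    ← intervalIntegral.integral_of_le (by linarith : -b ≤ -a),
    intervalIntegral.integral_comp_neg]

/-- Key bound: mean oscillation is at most twice the normalized `L¹` norm. -/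
lemma aux_meanOsc_le (hf : LocallyIntegrable f volume) {a b : ℝ} (hab : a < b) :
    meanOsc f a b ≤ 2 * ((b - a)⁻¹ * ∫ x in Ioo a b, |f x|) := by
  have hI : IntegrableOn f (Ioo a b) volume := aux_intOn hf a b
  have hvol : (volume (Ioo a b)).toReal = b - a := by
    rw [Real.volume_Ioo]; exact ENNReal.toReal_ofReal (by linarith)
  have hμfin : volume (Ioo a b) < ⊤ := by
    rw [Real.volume_Ioo]; exact ENNReal.ofReal_lt_top
  set m := intervalMean f a b with hm
  have hconst : IntegrableOn (fun _ : ℝ => |m|) (Ioo a b) volume :=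
    integrableOn_const hμfin.ne
  have hconst' : IntegrableOn (fun _ : ℝ => m) (Ioo a b) volume :=
    integrableOn_const hμfin.ne
  have h1 : (∫ x in Ioo a b, |f x - m|) ≤ (∫ x in Ioo a b, |f x|) + (b - a) * |m| := by
    have hstep : (∫ x in Ioo a b, |f x - m|) ≤ ∫ x in Ioo a b, (|f x| + |m|) :=
      integral_mono ((hI.sub hconst').abs) (hI.abs.add hconst) (fun x => abs_sub (f x) m)
    have hadd : (∫ x in Ioo a b, (|f x| + |m|)) =
        (∫ x in Ioo a b, |f x|) + (b - a) * |m| := by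
      rw [integral_add hI.abs hconst, setIntegral_const, measureReal_def, hvol, smul_eq_mul]
    linarith [hstep, hadd.le, hadd.ge]
  have h2 : (b - a) * |m| ≤ ∫ x in Ioo a b, |f x| := by
    have hnorm : |∫ x in Ioo a b, f x| ≤ ∫ x in Ioo a b, |f x| := by
      simpa [Real.norm_eq_abs] using norm_integral_le_integral_norm
        (μ := volume.restrict (Ioo a b)) f
    have : (b - a) * |m| = |∫ x in Ioo a b, f x| := by
      rw [hm, intervalMean, abs_mul, abs_of_nonneg (inv_nonneg.mpr (by linarith : (0:ℝ) ≤ b - a)),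
        ← mul_assoc, mul_inv_cancel₀ (by linarith : b - a ≠ 0), one_mul]
    linarith
  have h3 : (∫ x in Ioo a b, |f x - m|) ≤ 2 * ∫ x in Ioo a b, |f x| := by linarith
  have hpos : (0:ℝ) ≤ (b - a)⁻¹ := inv_nonneg.mpr (by linarith)
  calc meanOsc f a b = (b - a)⁻¹ * ∫ x in Ioo a b, |f x - m| := rfl
    _ ≤ (b - a)⁻¹ * (2 * ∫ x in Ioo a b, |f x|) := mul_le_mul_of_nonneg_left h3 hpos
    _ = 2 * ((b - a)⁻¹ * ∫ x in Ioo a b, |f x|) := by ring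

/-- Reflection invariance of the mean oscillation for odd functions. -/
lemma aux_meanOsc_neg (hodd : ∀ x, f (-x) = -f x) {a b : ℝ} (hab : a ≤ b) :
    meanOsc f (-b) (-a) = meanOsc f a b := by
  have hint : (∫ x in Ioo (-b) (-a), f x) = -∫ x in Ioo a b, f x := by
    rw [← aux_integral_Ioo_comp_neg f hab]
    simp only [hodd]
    exact integral_neg f
  have hmean : intervalMean f (-b) (-a) = -intervalMean f a b := by
    rw [intervalMean, intervalMean, hint, show -a - -b = b - a by ring]; ring
  rw [meanOsc, meanOsc, hmean, show -a - -b = b - a by ring,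
    ← aux_integral_Ioo_comp_neg (fun x => |f x - -intervalMean f a b|) hab]
  congr 1
  apply setIntegral_congr_fun measurableSet_Ioo
  intro x _
  simp only [hodd]
  rw [show -f x - -intervalMean f a b = -(f x - intervalMean f a b) by ring, abs_neg]

lemma aux_intervalMean_symm (hodd : ∀ x, f (-x) = -f x) {b : ℝ} (hb : 0 ≤ b) :
    intervalMean f (-b) b = 0 := by
  have h := aux_integral_Ioo_comp_neg f (by linarith : -b ≤ b)
  simp only [neg_neg, hodd, integral_neg] at h
  rw [intervalMean]
  have : (∫ x in Ioo (-b) b, f x) = 0 := by linarith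
  rw [this, mul_zero]

lemma aux_abs_double (hodd : ∀ x, f (-x) = -f x) (hf : LocallyIntegrable f volume)
    {b : ℝ} (hb : 0 ≤ b) :
    (∫ x in Ioo (-b) b, |f x|) = 2 * ∫ x in Ioo (0:ℝ) b, |f x| := by
  have hii : ∀ c d : ℝ, IntervalIntegrable (fun x => |f x|) volume c d := by
    intro c d
    have h1 : IntegrableOn f (uIcc c d) volume :=
      hf.integrableOn_isCompact (isCompact_uIcc : IsCompact (uIcc c d))
    have h2 : IntegrableOn (fun x => |f x|) (uIcc c d) volume := h1.abs
    exact h2.intervalIntegrable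
  have hsplit := intervalIntegral.integral_add_adjacent_intervals
    (hii (-b) 0) (hii 0 b)
  have hrefl : (∫ x in (-b)..(0:ℝ), |f x|) = ∫ x in (0:ℝ)..b, |f x| := by
    have := intervalIntegral.integral_comp_neg (a := 0) (b := b) (fun x => |f x|)
    simp only [hodd, abs_neg, neg_zero] at this
    exact this.symm
  have h1 : (∫ x in Ioo (-b) b, |f x|) = ∫ x in (-b)..b, |f x| := by
    rw [intervalIntegral.integral_of_le (by linarith : -b ≤ b), integral_Ioc_eq_integral_Ioo]
  have h2 : (∫ x in Ioo (0:ℝ) b, |f x|) = ∫ x in (0:ℝ)..b, |f x| := by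
    rw [intervalIntegral.integral_of_le hb, integral_Ioc_eq_integral_Ioo]
  rw [h1, h2, ← hsplit, hrefl]; ring

/-- The average of `|f|` over `(0,b)` equals the mean oscillation over `(-b,b)`. -/
lemma aux_avg_eq (hodd : ∀ x, f (-x) = -f x) (hf : LocallyIntegrable f volume)
    {b : ℝ} (hb : 0 < b) :
    (1 / b) * (∫ x in Ioo (0:ℝ) b, |f x|) = meanOsc f (-b) b := by
  rw [meanOsc, aux_intervalMean_symm hodd hb.le]
  simp only [sub_zero]
  rw [aux_abs_double hodd hf hb.le, show b - -b = 2 * b by ring]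
  rw [mul_inv, one_div]
  ring

end Aux

/-- Characterization of odd `BMO(ℝ)` functions: an odd locally integrable `f` is in `BMO`
iff its mean oscillation over intervals `(a,b) ⊂ (0,∞)` and its averages
`(1/b)∫_0^b |f|` are uniformly bounded; moreover the corresponding bounds are comparable
(with universal constants `c₁, c₂`). -/
theorem bmo_odd_characterization :
    ∃ c₁ c₂ : ℝ, 0 < c₁ ∧ 0 < c₂ ∧
      ∀ f : ℝ → ℝ, (∀ x, f (-x) = -f x) → LocallyIntegrable f volume →
        (((∃ M : ℝ, ∀ a b : ℝ, a < b → meanOsc f a b ≤ M) ↔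
            (∃ C : ℝ, 0 < C ∧
              (∀ a b : ℝ, 0 < a → a < b → meanOsc f a b ≤ C) ∧
              (∀ b : ℝ, 0 < b → (1 / b) * ∫ x in Ioo (0 : ℝ) b, |f x| ≤ C))) ∧
          (∀ M : ℝ, (∀ a b : ℝ, a < b → meanOsc f a b ≤ M) →
            (∀ a b : ℝ, 0 < a → a < b → meanOsc f a b ≤ c₁ * M) ∧
            (∀ b : ℝ, 0 < b → (1 / b) * ∫ x in Ioo (0 : ℝ) b, |f x| ≤ c₁ * M)) ∧
          (∀ C : ℝ, (∀ a b : ℝ, 0 < a → a < b → meanOsc f a b ≤ C) →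
            (∀ b : ℝ, 0 < b → (1 / b) * ∫ x in Ioo (0 : ℝ) b, |f x| ≤ C) →
            ∀ a b : ℝ, a < b → meanOsc f a b ≤ c₂ * C)) := by
  refine ⟨1, 4, one_pos, by norm_num, ?_⟩
  intro f hodd hf
  -- the c₁ = 1 direction
  have fwd : ∀ M : ℝ, (∀ a b : ℝ, a < b → meanOsc f a b ≤ M) →
      (∀ a b : ℝ, 0 < a → a < b → meanOsc f a b ≤ M) ∧
      (∀ b : ℝ, 0 < b → (1 / b) * ∫ x in Ioo (0 : ℝ) b, |f x| ≤ M) := by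
    intro M hM
    refine ⟨fun a b _ hab => hM a b hab, fun b hb => ?_⟩
    rw [aux_avg_eq hodd hf hb]
    exact hM (-b) b (by linarith)
  -- the c₂ = 4 direction
  have bwd : ∀ C : ℝ, (∀ a b : ℝ, 0 < a → a < b → meanOsc f a b ≤ C) →
      (∀ b : ℝ, 0 < b → (1 / b) * ∫ x in Ioo (0 : ℝ) b, |f x| ≤ C) →
      ∀ a b : ℝ, a < b → meanOsc f a b ≤ 4 * C := by
    intro C hC1 hC2 a b hab
    have hC0 : 0 ≤ C := by
      have h01 : (0:ℝ) ≤ (1 / 1) * ∫ x in Ioo (0:ℝ) 1, |f x| := by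
        have := integral_nonneg (μ := volume.restrict (Ioo (0:ℝ) 1)) (f := fun x => |f x|)
          (fun x => abs_nonneg (f x))
        simpa using this
      linarith [hC2 1 one_pos]
    -- central case: a ≤ 0 ≤ b
    have central : ∀ a b : ℝ, a < b → a ≤ 0 → 0 ≤ b → meanOsc f a b ≤ 4 * C := by
      intro a b hab ha0 hb0
      set r := max b (-a) with hr
      have hrb : b ≤ r := le_max_left _ _
      have hra : -a ≤ r := le_max_right _ _
      have hr0 : 0 < r := by
        rcases lt_or_ge 0 b with h | h
        · exact lt_of_lt_of_le h hrb
        · have : 0 < -a := by linarith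
          exact lt_of_lt_of_le this hra
      have hrle : r ≤ b - a := by
        rcases max_cases b (-a) with ⟨h, _⟩ | ⟨h, _⟩ <;> rw [hr, h] <;> linarith
      have hsub : Ioo a b ⊆ Ioo (-r) r :=
        Ioo_subset_Ioo (by linarith) (by linarith)
      have habs : IntegrableOn (fun x => |f x|) (Ioo (-r) r) volume :=
        (aux_intOn hf (-r) r).abs
      have hmono : (∫ x in Ioo a b, |f x|) ≤ ∫ x in Ioo (-r) r, |f x| :=
        setIntegral_mono_set habs (ae_of_all _ fun x => abs_nonneg _)
          (HasSubset.Subset.eventuallyLE hsub)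
      have hdouble : (∫ x in Ioo (-r) r, |f x|) = 2 * ∫ x in Ioo (0:ℝ) r, |f x| :=
        aux_abs_double hodd hf hr0.le
      have havg : (∫ x in Ioo (0:ℝ) r, |f x|) ≤ r * C := by
        have := hC2 r hr0
        rw [one_div] at this
        calc (∫ x in Ioo (0:ℝ) r, |f x|)
            = r * (r⁻¹ * ∫ x in Ioo (0:ℝ) r, |f x|) := by
              field_simp
          _ ≤ r * C := mul_le_mul_of_nonneg_left this hr0.le
      have hkey : (∫ x in Ioo a b, |f x|) ≤ 2 * ((b - a) * C) := by
        have : r * C ≤ (b - a) * C := mul_le_mul_of_nonneg_right hrle hC0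
        calc (∫ x in Ioo a b, |f x|) ≤ 2 * ∫ x in Ioo (0:ℝ) r, |f x| := by
              rw [← hdouble]; exact hmono
          _ ≤ 2 * (r * C) := by linarith
          _ ≤ 2 * ((b - a) * C) := by linarith
      have hlen : (0:ℝ) < b - a := by linarith
      calc meanOsc f a b ≤ 2 * ((b - a)⁻¹ * ∫ x in Ioo a b, |f x|) :=
            aux_meanOsc_le hf hab
        _ ≤ 2 * ((b - a)⁻¹ * (2 * ((b - a) * C))) := by
            have := mul_le_mul_of_nonneg_left hkey (by positivity : (0:ℝ) ≤ (b - a)⁻¹)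
            linarith
        _ = 4 * ((b - a)⁻¹ * (b - a)) * C := by ring
        _ = 4 * C := by rw [inv_mul_cancel₀ (ne_of_gt hlen)]; ring
    rcases lt_or_ge 0 a with ha | ha
    · -- 0 < a < b
      have := hC1 a b ha hab
      linarith
    rcases lt_or_ge b 0 with hb | hb
    · -- a < b < 0 : reflect
      rw [← aux_meanOsc_neg hodd hab.le]
      have := hC1 (-b) (-a) (by linarith) (by linarith)
      linarith
    · exact central a b hab ha hb
  refine ⟨?_, fun M hM => by simpa using fwd M hM, fun C hC1 hC2 => bwd C hC1 hC2⟩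
  constructor
  · rintro ⟨M, hM⟩
    have hM0 : 0 ≤ M := le_trans (aux_meanOsc_nonneg f (by norm_num : (0:ℝ) ≤ 1))
      (hM 0 1 one_pos)
    obtain ⟨h1, h2⟩ := fwd M hM
    exact ⟨M + 1, by linarith, fun a b ha hab => by linarith [h1 a b ha hab],
      fun b hb => by linarith [h2 b hb]⟩
  · rintro ⟨C, _, hC1, hC2⟩
    exact ⟨4 * C, fun a b hab => bwd C hC1 hC2 a b hab⟩
end
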